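/- arXiv:1805.11679 — 10 statements merged into one kernel-verified Lean document; each statement's English description precedes it below -/
import Mathlib

section
/- Identify ℝ² with ℂ and let Y = {y_k : k ≥ 2} where y_k = r_k e^{iφ_k}, r_k = k log k, φ_k = (log log k)^{1/2}. Then for every x ∈ ℝ² and every v ∈ S¹, dist(L_{x,v}, Y) = 0; that is, every ray in the plane comes arbitrarily close to the spiral set Y. -/
open Metric Set Filter Real

noncomputable def setDist {E : Type*} [PseudoMetricSpace E] (A B : Set E) : ℝ :=
  sInf (Set.image2 dist A B)

noncomputable def spiralPoint (k : ℕ) : ℂ :=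
  (((k : ℝ) * Real.log k : ℝ) : ℂ) *
    Complex.exp (Complex.I * (Real.sqrt (Real.log (Real.log k)) : ℝ))

/-!
Write `r k = k log k`, `φ k = √(log log k)`, `θ = arg v` and `a + b i = x conj v`. Multiplication
by `conj v` rotates the ray onto the horizontal ray issued from `a + b i`, so `spiralPoint k` lies
within `ε` of the ray as soon as `a ≤ r k cos (φ k - θ)` and `|r k sin (φ k - θ) - b| ≤ ε`.
The angle grows so slowly that `r (k + 1) (φ (k + 1) - φ k) → 0`, while `r (k + 1) / r k → 1`.
Whenever `φ k - θ` passes a large multiple of `2π`, the height `r k sin (φ k - θ) - b` climbs from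
below `-ε` to far above it; since its steps are small, at the first index where it reaches `-ε`
it is still negative, and there `cos (φ k - θ) ≥ 1/2`.
-/

open Topology ComplexConjugate

theorem setDist_eq_zero_of_forall_exists_dist_le {E : Type*} [PseudoMetricSpace E] {A B : Set E}
    (h : ∀ ε > 0, ∃ a ∈ A, ∃ b ∈ B, dist a b ≤ ε) : setDist A B = 0 := by
  have hnonneg : ∀ d ∈ image2 dist A B, 0 ≤ d := by
    rintro _ ⟨a, -, b, -, rfl⟩
    exact dist_nonneg
  obtain ⟨a, ha, b, hb, -⟩ := h 1 one_pos
  refine le_antisymm ?_ (Real.sInf_nonneg hnonneg)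
  refine (Real.sInf_le_iff ⟨0, hnonneg⟩ ⟨_, mem_image2_of_mem ha hb⟩).2 fun ε hε => ?_
  obtain ⟨a, ha, b, hb, hab⟩ := h (ε / 2) (half_pos hε)
  exact ⟨_, mem_image2_of_mem ha hb, by linarith⟩

theorem dist_add_re_smul_eq_abs_im {x v : ℂ} (hv : ‖v‖ = 1) (y : ℂ) :
    dist (x + ((y - x) * conj v).re • v) y = |((y - x) * conj v).im| := by
  set w := (y - x) * conj v
  have hvv : conj v * v = 1 := by
    rw [mul_comm, Complex.mul_conj, Complex.normSq_eq_norm_sq, hv]; norm_num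
  have hy : y = x + w * v := by rw [mul_assoc, hvv, mul_one, add_sub_cancel]
  have hw : w = w.re + w.im * Complex.I := (Complex.re_add_im w).symm
  rw [dist_eq_norm, hy, add_sub_add_left_eq_sub, Complex.real_smul, ← sub_mul]
  nth_rewrite 2 [hw]
  rw [show (w.re : ℂ) - (w.re + w.im * Complex.I) = -(w.im * Complex.I) by ring]
  simp [hv]

theorem exists_lt_le_succ_of_lt_of_le {α : Type*} [LinearOrder α] {f : ℕ → α} {c : α}
    {m n : ℕ} (hmn : m ≤ n) (hm : f m < c) (hn : c ≤ f n) :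
    ∃ k, m ≤ k ∧ k < n ∧ f k < c ∧ c ≤ f (k + 1) := by
  induction n, hmn using Nat.le_induction with
  | base => exact absurd hn (not_le.2 hm)
  | succ n hmn ih =>
    by_cases hcn : c ≤ f n
    · obtain ⟨k, hmk, hkn, hk⟩ := ih hcn
      exact ⟨k, hmk, hkn.trans n.lt_succ_self, hk⟩
    · exact ⟨n, hmn, n.lt_succ_self, not_le.1 hcn, hn⟩

theorem exists_gt_mem_Ico_of_tendsto_of_step_le {φ : ℕ → ℝ} {K : ℕ} {c δ : ℝ}
    (hφ : Tendsto φ atTop atTop) (hstep : ∀ k ≥ K, φ (k + 1) ≤ φ k + δ) (hK : φ K < c) :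
    ∃ k > K, c ≤ φ k ∧ φ k < c + δ := by
  obtain ⟨n, hcn, hKn⟩ := ((hφ.eventually_ge_atTop c).and (eventually_ge_atTop K)).exists
  obtain ⟨j, hKj, -, hj, hcj⟩ := exists_lt_le_succ_of_lt_of_le hKn hK hcn
  exact ⟨j + 1, Nat.lt_succ_of_le hKj, hcj, by linarith [hstep j hKj]⟩

theorem sin_le_neg_half {x : ℝ} (h₁ : -(π / 2) ≤ x) (h₂ : x ≤ -(π / 6)) : sin x ≤ -(1 / 2) := by
  rw [← sin_pi_div_six, ← sin_neg]
  exact sin_le_sin_of_le_of_le_pi_div_two h₁ (by linarith [pi_pos]) h₂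

theorem half_le_sin {x : ℝ} (h₁ : π / 6 ≤ x) (h₂ : x ≤ π / 2) : 1 / 2 ≤ sin x := by
  rw [← sin_pi_div_six]
  exact sin_le_sin_of_le_of_le_pi_div_two (by linarith [pi_pos]) h₂ h₁

theorem half_le_cos {x : ℝ} (h : |x| ≤ π / 3) : 1 / 2 ≤ cos x := by
  rw [← cos_pi_div_three, ← cos_abs x]
  exact cos_le_cos_of_nonneg_of_le_pi (abs_nonneg x) (by linarith [pi_pos]) h

theorem mul_sub_lt_zero_of_lt_neg {r₀ r₁ s₀ s₁ b ε : ℝ} (hε : 0 ≤ ε) (hr₀ : 0 < r₀)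
    (hr : r₀ ≤ r₁) (hB : r₀ * s₀ - b < -ε) (hs : r₁ * (s₁ - s₀) ≤ ε / 2)
    (hgrowth : (r₁ - r₀) / r₀ * |b| ≤ ε / 2) : r₁ * s₁ - b < 0 := by
  -- `r₁ s₁ - b = r₁ (s₁ - s₀) + (r₁ - r₀) s₀ + (r₀ s₀ - b)`; if `s₀ > 0`, then `r₀ s₀ < |b|`
  have hdrift : (r₁ - r₀) * s₀ ≤ ε / 2 := by
    rcases le_or_gt s₀ 0 with hs₀ | hs₀
    · nlinarith
    · have hrs : r₀ * s₀ ≤ |b| := by linarith [le_abs_self b]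
      calc (r₁ - r₀) * s₀ = (r₁ - r₀) / r₀ * (r₀ * s₀) := by field_simp
        _ ≤ (r₁ - r₀) / r₀ * |b| := by gcongr
        _ ≤ ε / 2 := hgrowth
  nlinarith

theorem exists_sin_sign_change_of_step_le_half {φ : ℕ → ℝ} {K : ℕ} (hφ : Tendsto φ atTop atTop)
    (hmono : ∀ k ≥ K, φ k ≤ φ (k + 1)) (hstep : ∀ k ≥ K, φ (k + 1) ≤ φ k + 1 / 2) :
    ∃ k₀ k₂, K ≤ k₀ ∧ k₀ < k₂ ∧ sin (φ k₀) ≤ -(1 / 2) ∧ 1 / 2 ≤ sin (φ k₂) ∧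
      ∀ k ∈ Icc k₀ k₂, 1 / 2 ≤ cos (φ k) := by
  have hπ := pi_gt_three
  obtain ⟨n, hn⟩ := exists_nat_gt ((φ K + π / 3) / (2 * π))
  set m : ℝ := n * (2 * π)
  have hKm : φ K < m - π / 3 := by rw [div_lt_iff₀ (by positivity)] at hn; linarith
  -- steps of at most `1/2 < π/6` stop in `[m - π/3, m - π/6]` and in `[m + π/6, m + π/3]`
  obtain ⟨k₀, hKk₀, hk₀lo, hk₀hi⟩ := exists_gt_mem_Ico_of_tendsto_of_step_le hφ hstep hKm
  obtain ⟨k₂, hk₀k₂, hk₂lo, hk₂hi⟩ := exists_gt_mem_Ico_of_tendsto_of_step_le (c := m + π / 6)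
    hφ (fun k hk => hstep k (hKk₀.le.trans hk)) (by linarith)
  refine ⟨k₀, k₂, hKk₀.le, hk₀k₂, ?_, ?_, fun k hk => ?_⟩
  · rw [← sin_sub_nat_mul_two_pi _ n]
    exact sin_le_neg_half (by linarith) (by linarith)
  · rw [← sin_sub_nat_mul_two_pi _ n]
    exact half_le_sin (by linarith) (by linarith)
  · have hmono' := monotoneOn_nat_Ici_of_le_succ hmono
    have hlo : φ k₀ ≤ φ k := hmono' hKk₀.le (hKk₀.le.trans hk.1) hk.1
    have hhi : φ k ≤ φ k₂ := hmono' (hKk₀.le.trans hk.1) (hKk₀.le.trans hk₀k₂.le) hk.2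
    rw [← cos_sub_nat_mul_two_pi _ n]
    exact half_le_cos (abs_le.2 ⟨by linarith, by linarith⟩)

theorem exists_ge_le_mul_cos_and_abs_mul_sin_sub_le {r φ : ℕ → ℝ} {K : ℕ} {a b ε : ℝ}
    (hε : 0 < ε) (hφ : Tendsto φ atTop atTop) (hr : ∀ k ≥ K, 2 * (|a| + |b| + ε) < r k)
    (hr_mono : ∀ k ≥ K, r k ≤ r (k + 1)) (hφ_mono : ∀ k ≥ K, φ k ≤ φ (k + 1))
    (hstep : ∀ k ≥ K, r (k + 1) * (φ (k + 1) - φ k) ≤ ε / 2)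
    (hgrowth : ∀ k ≥ K, (r (k + 1) - r k) / r k * |b| ≤ ε / 2) :
    ∃ k ≥ K, a ≤ r k * cos (φ k) ∧ |r k * sin (φ k) - b| ≤ ε := by
  have hab := abs_nonneg a
  have hbb := abs_nonneg b
  have hstep_half : ∀ k ≥ K, φ (k + 1) ≤ φ k + 1 / 2 := by
    intro k hk
    have := hr (k + 1) (by omega)
    nlinarith [hstep k hk, hφ_mono k hk]
  obtain ⟨k₀, k₂, hKk₀, hk₀k₂, hsin₀, hsin₂, hcos⟩ :=
    exists_sin_sign_change_of_step_le_half hφ hφ_mono hstep_half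
  have hB₀ : r k₀ * sin (φ k₀) - b < -ε := by
    nlinarith [hr k₀ hKk₀, neg_abs_le b]
  have hB₂ : -ε ≤ r k₂ * sin (φ k₂) - b := by
    nlinarith [hr k₂ (by omega), le_abs_self b]
  obtain ⟨j, hk₀j, hjk₂, hBj, hBj₁⟩ :=
    exists_lt_le_succ_of_lt_of_le (f := fun k => r k * sin (φ k) - b) hk₀k₂.le hB₀ hB₂
  have hKj : K ≤ j := hKk₀.trans hk₀j
  have hrj₁ := hr (j + 1) (by omega)
  refine ⟨j + 1, by omega, ?_, ?_⟩
  · nlinarith [hcos (j + 1) ⟨by omega, hjk₂⟩, le_abs_self a]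
  · have hsin_step : sin (φ (j + 1)) - sin (φ j) ≤ φ (j + 1) - φ j :=
      (le_abs_self _).trans ((abs_sin_sub_sin_le _ _).trans
        (abs_of_nonneg (sub_nonneg.2 (hφ_mono j hKj))).le)
    have hcross := mul_sub_lt_zero_of_lt_neg hε.le (by linarith [hr j hKj]) (hr_mono j hKj) hBj
      ((mul_le_mul_of_nonneg_left hsin_step (by linarith)).trans (hstep j hKj)) (hgrowth j hKj)
    exact abs_le.2 ⟨hBj₁, hcross.le.trans hε.le⟩

theorem frequently_le_mul_cos_and_abs_mul_sin_sub_le {r φ : ℕ → ℝ} (hr : Tendsto r atTop atTop)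
    (hφ : Tendsto φ atTop atTop) (hr_mono : ∀ᶠ k in atTop, r k ≤ r (k + 1))
    (hφ_mono : ∀ᶠ k in atTop, φ k ≤ φ (k + 1))
    (hstep : Tendsto (fun k => r (k + 1) * (φ (k + 1) - φ k)) atTop (𝓝 0))
    (hgrowth : Tendsto (fun k => (r (k + 1) - r k) / r k) atTop (𝓝 0))
    (a b : ℝ) {ε : ℝ} (hε : 0 < ε) :
    ∃ᶠ k in atTop, a ≤ r k * cos (φ k) ∧ |r k * sin (φ k) - b| ≤ ε := by
  have hgrowth' : Tendsto (fun k => (r (k + 1) - r k) / r k * |b|) atTop (𝓝 0) := by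
    simpa using hgrowth.mul_const |b|
  rw [frequently_atTop]
  intro N
  obtain ⟨K, hK⟩ := eventually_atTop.1 <| (eventually_ge_atTop N).and <|
    (hr.eventually_gt_atTop (2 * (|a| + |b| + ε))).and <| hr_mono.and <| hφ_mono.and <|
    (hstep.eventually (ge_mem_nhds (half_pos hε))).and <|
    hgrowth'.eventually (ge_mem_nhds (half_pos hε))
  obtain ⟨k, hk, hkε⟩ := exists_ge_le_mul_cos_and_abs_mul_sin_sub_le hε hφ
    (fun k hk => (hK k hk).2.1) (fun k hk => (hK k hk).2.2.1) (fun k hk => (hK k hk).2.2.2.1)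
    (fun k hk => (hK k hk).2.2.2.2.1) (fun k hk => (hK k hk).2.2.2.2.2)
  exact ⟨k, (hK K le_rfl).1.trans hk, hkε⟩

theorem Real.log_sub_log_le_div {a b : ℝ} (ha : 0 < a) (hb : 0 < b) :
    log b - log a ≤ (b - a) / a := by
  rw [← log_div hb.ne' ha.ne', sub_div, div_self ha.ne']
  exact log_le_sub_one_of_pos (div_pos hb ha)

theorem Real.sqrt_sub_sqrt_le_div {a b : ℝ} (ha : 0 < a) (hb : 0 ≤ b) :
    √b - √a ≤ (b - a) / (2 * √a) := by
  have hsa := sqrt_pos.2 ha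
  rw [le_div_iff₀ (by positivity)]
  nlinarith [sq_sqrt ha.le, sq_sqrt hb, sq_nonneg (√b - √a)]

noncomputable def spiralRadius (k : ℕ) : ℝ := k * log k

noncomputable def spiralAngle (k : ℕ) : ℝ := √(log (log k))

theorem one_lt_log_natCast {k : ℕ} (hk : 3 ≤ k) : 1 < log k := by
  have : (3 : ℝ) ≤ k := by exact_mod_cast hk
  rw [lt_log_iff_exp_lt (by linarith)]
  linarith [exp_one_lt_d9]

theorem tendsto_spiralRadius_atTop : Tendsto spiralRadius atTop atTop :=
  tendsto_natCast_atTop_atTop.atTop_mul_atTop₀ (tendsto_log_atTop.comp tendsto_natCast_atTop_atTop)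

theorem tendsto_spiralAngle_atTop : Tendsto spiralAngle atTop atTop :=
  tendsto_sqrt_atTop.comp <| tendsto_log_atTop.comp <|
    tendsto_log_atTop.comp tendsto_natCast_atTop_atTop

theorem spiralRadius_pos {k : ℕ} (hk : 2 ≤ k) : 0 < spiralRadius k := by
  have : (2 : ℝ) ≤ k := by exact_mod_cast hk
  exact mul_pos (by linarith) (log_pos (by linarith))

theorem spiralRadius_le_succ (k : ℕ) : spiralRadius k ≤ spiralRadius (k + 1) := by
  unfold spiralRadius
  rcases k.eq_zero_or_pos with rfl | hk
  · simp
  · have : (1 : ℝ) ≤ k := by exact_mod_cast hk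
    push_cast
    have := log_nonneg this
    gcongr <;> linarith

theorem spiralAngle_le_succ {k : ℕ} (hk : 2 ≤ k) : spiralAngle k ≤ spiralAngle (k + 1) := by
  have : (2 : ℝ) ≤ k := by exact_mod_cast hk
  unfold spiralAngle
  push_cast
  gcongr
  · exact log_pos (by linarith)
  · linarith

theorem log_succ_sub_log_le {k : ℕ} (hk : 1 ≤ k) : log (k + 1 : ℕ) - log k ≤ 1 / k := by
  have : (1 : ℝ) ≤ k := by exact_mod_cast hk
  push_cast
  simpa using log_sub_log_le_div (a := k) (b := k + 1) (by linarith) (by linarith)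

theorem spiralRadius_succ_sub_le {k : ℕ} (hk : 3 ≤ k) :
    spiralRadius (k + 1) - spiralRadius k ≤ 3 / k * spiralRadius k := by
  have hk' : (3 : ℝ) ≤ k := by exact_mod_cast hk
  have hlog := one_lt_log_natCast hk
  have hd := log_succ_sub_log_le (by omega : 1 ≤ k)
  have hsplit : spiralRadius (k + 1) - spiralRadius k
      = (k + 1) * (log (k + 1 : ℕ) - log k) + log k := by
    unfold spiralRadius; push_cast; ring
  have hkd : (k + 1) * (log (k + 1 : ℕ) - log k) ≤ 2 := by
    calc (k + 1) * (log (k + 1 : ℕ) - log k) ≤ (k + 1) * (1 / k) := by gcongr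
      _ ≤ 2 := by rw [mul_one_div, div_le_iff₀ (by linarith)]; linarith
  rw [hsplit, spiralRadius, ← mul_assoc, div_mul_cancel₀ _ (by positivity)]
  linarith

theorem tendsto_spiralRadius_succ_sub_div :
    Tendsto (fun k => (spiralRadius (k + 1) - spiralRadius k) / spiralRadius k) atTop (𝓝 0) := by
  refine tendsto_of_tendsto_of_tendsto_of_le_of_le' tendsto_const_nhds
    (tendsto_const_div_atTop_nhds_zero_nat 3) ?_ ?_ <;>
    filter_upwards [eventually_ge_atTop 3] with k hk
  · exact div_nonneg (sub_nonneg.2 (spiralRadius_le_succ k)) (spiralRadius_pos (by omega)).le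
  · rw [div_le_iff₀ (spiralRadius_pos (by omega))]
    exact spiralRadius_succ_sub_le hk

theorem spiralAngle_succ_sub_le {k : ℕ} (hk : 3 ≤ k) :
    spiralAngle (k + 1) - spiralAngle k ≤ 1 / (2 * spiralRadius k * spiralAngle k) := by
  have hk' : (3 : ℝ) ≤ k := by exact_mod_cast hk
  have hL := one_lt_log_natCast hk
  have hLL : log k ≤ log (k + 1 : ℕ) := log_le_log (by linarith) (by push_cast; linarith)
  have hu : 0 < log (log k) := log_pos hL
  have hu' : log (log k) ≤ log (log (k + 1 : ℕ)) := log_le_log (by linarith) hLL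
  have hlog₂ : log (log (k + 1 : ℕ)) - log (log k) ≤ 1 / spiralRadius k :=
    calc log (log (k + 1 : ℕ)) - log (log k) ≤ (log (k + 1 : ℕ) - log k) / log k :=
          log_sub_log_le_div (by linarith) (by linarith)
      _ ≤ 1 / k / log k := by gcongr; exact log_succ_sub_log_le (by omega)
      _ = 1 / spiralRadius k := by rw [spiralRadius, div_div]
  calc spiralAngle (k + 1) - spiralAngle k
      ≤ (log (log (k + 1 : ℕ)) - log (log k)) / (2 * spiralAngle k) :=
        sqrt_sub_sqrt_le_div hu (by linarith)
    _ ≤ 1 / spiralRadius k / (2 * spiralAngle k) := by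
        gcongr; exact (mul_pos two_pos (sqrt_pos.2 hu)).le
    _ = 1 / (2 * spiralRadius k * spiralAngle k) := by ring

theorem tendsto_spiralRadius_succ_mul_angle_sub :
    Tendsto (fun k => spiralRadius (k + 1) * (spiralAngle (k + 1) - spiralAngle k))
      atTop (𝓝 0) := by
  have hinv : Tendsto (fun k => (2 * spiralAngle k)⁻¹) atTop (𝓝 0) :=
    tendsto_inv_atTop_zero.comp (tendsto_spiralAngle_atTop.const_mul_atTop two_pos)
  have hbound := (tendsto_spiralRadius_succ_sub_div.const_add 1).mul hinv
  rw [add_zero, one_mul] at hbound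
  refine tendsto_of_tendsto_of_tendsto_of_le_of_le' tendsto_const_nhds hbound ?_ ?_ <;>
    filter_upwards [eventually_ge_atTop 3] with k hk
  · exact mul_nonneg (spiralRadius_pos (by omega)).le
      (sub_nonneg.2 (spiralAngle_le_succ (by omega)))
  · have hr := spiralRadius_pos (by omega : 2 ≤ k)
    have hφ : 0 < spiralAngle k := sqrt_pos.2 (log_pos (one_lt_log_natCast hk))
    calc spiralRadius (k + 1) * (spiralAngle (k + 1) - spiralAngle k)
        ≤ spiralRadius (k + 1) * (1 / (2 * spiralRadius k * spiralAngle k)) := by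
          gcongr
          · exact (spiralRadius_pos (by omega)).le
          · exact spiralAngle_succ_sub_le hk
      _ = (1 + (spiralRadius (k + 1) - spiralRadius k) / spiralRadius k) *
            (2 * spiralAngle k)⁻¹ := by
          field_simp; ring

theorem frequently_le_spiralRadius_mul_cos_and_abs_sub_le (θ a b : ℝ) {ε : ℝ} (hε : 0 < ε) :
    ∃ᶠ k in atTop, a ≤ spiralRadius k * cos (spiralAngle k - θ) ∧
      |spiralRadius k * sin (spiralAngle k - θ) - b| ≤ ε := by
  refine frequently_le_mul_cos_and_abs_mul_sin_sub_le (φ := fun k => spiralAngle k - θ)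
    tendsto_spiralRadius_atTop (tendsto_atTop_add_const_right _ (-θ) tendsto_spiralAngle_atTop)
    (Eventually.of_forall spiralRadius_le_succ) ?_ ?_ tendsto_spiralRadius_succ_sub_div a b hε
  · filter_upwards [eventually_ge_atTop 2] with k hk
    exact sub_le_sub_right (spiralAngle_le_succ hk) θ
  · simpa only [sub_sub_sub_cancel_right] using tendsto_spiralRadius_succ_mul_angle_sub

theorem spiralPoint_sub_mul_conj (k : ℕ) {v : ℂ} (hv : ‖v‖ = 1) (x : ℂ) :
    (spiralPoint k - x) * conj v =
      spiralRadius k * Complex.exp ((spiralAngle k - Complex.arg v : ℝ) * Complex.I) -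
        x * conj v := by
  have hv' : Complex.exp (Complex.arg v * Complex.I) = v := by
    simpa [hv] using Complex.norm_mul_exp_arg_mul_I v
  have hvv : v * conj v = 1 := by
    rw [Complex.mul_conj, Complex.normSq_eq_norm_sq, hv]; norm_num
  have hexp : Complex.exp (Complex.I * spiralAngle k) =
      Complex.exp ((spiralAngle k - Complex.arg v : ℝ) * Complex.I) * v := by
    calc Complex.exp (Complex.I * spiralAngle k)
        = Complex.exp ((spiralAngle k - Complex.arg v : ℝ) * Complex.I) *
            Complex.exp (Complex.arg v * Complex.I) := by
          rw [← Complex.exp_add]; push_cast; ring_nf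
      _ = _ := by rw [hv']
  rw [sub_mul]
  change (spiralRadius k : ℂ) * Complex.exp (Complex.I * spiralAngle k) * conj v - x * conj v = _
  rw [hexp, mul_assoc, mul_assoc, hvv, mul_one]

theorem stmt6 (Y : Set ℂ) (hY : Y = {w : ℂ | ∃ k : ℕ, 2 ≤ k ∧ w = spiralPoint k})
    (x v : ℂ) (hv : ‖v‖ = 1) :
    setDist {p : ℂ | ∃ t : ℝ, 0 ≤ t ∧ p = x + t • v} Y = 0 := by
  subst hY
  refine setDist_eq_zero_of_forall_exists_dist_le fun ε hε => ?_
  obtain ⟨k, ⟨hcos, hsin⟩, hk⟩ := ((frequently_le_spiralRadius_mul_cos_and_abs_sub_le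
    (Complex.arg v) (x * conj v).re (x * conj v).im hε).and_eventually
    (eventually_ge_atTop 2)).exists
  have hw := spiralPoint_sub_mul_conj k hv x
  refine ⟨x + ((spiralPoint k - x) * conj v).re • v, ⟨_, ?_, rfl⟩, spiralPoint k, ⟨k, hk, rfl⟩, ?_⟩
  · rw [hw, Complex.sub_re, Complex.re_ofReal_mul, Complex.exp_ofReal_mul_I_re]
    linarith
  · rw [dist_add_re_smul_eq_abs_im hv, hw, Complex.sub_im, Complex.im_ofReal_mul,
      Complex.exp_ofReal_mul_I_im]
    exact hsin
end

section
/- Let d ≥ 2. For any ε > 0 and M > 1 there exists a subset Y ⊆ ℤ^d such that: (1) every point of ℝ^d is visible for Y; (2) the complement Ỹ = ℤ^d \ Y satisfies #(Ỹ ∩ B(0,r)) < εr for all r > 0; (3) Y is relatively dense in ℝ^d; (4) any two distinct points of Ỹ are at distance at least M. -/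
open Metric Set MeasureTheory Filter Real

def ray {E : Type*} [NormedAddCommGroup E] [NormedSpace ℝ E] (x v : E) : Set E :=
  {p : E | ∃ t : ℝ, 0 ≤ t ∧ p = x + t • v}

/-!
Enumerate `ℤ^d` as `u₀, u₁, …` and from each `uₙ` remove the lattice points `uₙ + j·(aₙ, 1, 0, …)`,
`j ≥ 1`, where the slopes `aₙ` grow so fast that `aₙ ≥ 2ⁿ K + |(uₙ)₀|` and each `aₙ` dominates all
earlier ones. Then the ray from `uₙ` in direction `(aₙ, 1, 0, …)` meets no remaining lattice point,
and since that direction has an integer coordinate equal to `1`, every other lattice point stays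
at distance at least `1 / (1 + ‖(aₙ, 1, 0, …)‖)` from it. A non-lattice point has a non-integer
coordinate, which a ray along another axis keeps fixed. The removed points on the `n`-th ray that
lie in `B(0, r)` number at most `r / (K 2ⁿ)`, hence `2r / K` in total; the domination makes two
removed points on different rays far apart in the first or second coordinate, so they are
`M`-separated, and then one of any two neighbouring lattice points survives, so `Y` is
relatively dense.
-/

namespace Visibility

lemma setDist_pos_of_forall_le {E : Type*} [PseudoMetricSpace E] {A B : Set E} (hA : A.Nonempty)
    (hB : B.Nonempty) {δ : ℝ} (hδ : 0 < δ) (h : ∀ a ∈ A, ∀ b ∈ B, δ ≤ dist a b) :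
    0 < setDist A B :=
  hδ.trans_le <| le_csInf (hA.image2 hB) <| by
    rintro _ ⟨a, ha, b, hb, rfl⟩
    exact h a ha b hb

section Ray

variable {E : Type*} [NormedAddCommGroup E] [NormedSpace ℝ E]

def IsVisible (Y : Set E) (x : E) : Prop :=
  ∃ v ∈ sphere (0 : E) 1, ∃ δ > 0, ∀ p ∈ ray x v, ∀ y ∈ Y \ {x}, δ ≤ dist p y

lemma self_mem_ray (x v : E) : x ∈ ray x v := ⟨0, le_rfl, by simp⟩

lemma IsVisible.exists_setDist_pos {Y : Set E} {x : E} (hx : IsVisible Y x)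
    (hY : (Y \ {x}).Nonempty) : ∃ v ∈ sphere (0 : E) 1, 0 < setDist (ray x v) (Y \ {x}) := by
  obtain ⟨v, hv, δ, hδ, h⟩ := hx
  exact ⟨v, hv, setDist_pos_of_forall_le ⟨x, self_mem_ray x v⟩ hY hδ h⟩

lemma nonempty_diff_singleton_of_forall_dist_lt [Nontrivial E] {Y : Set E} {R : ℝ} (hR : 0 < R)
    (hY : ∀ z, ∃ y ∈ Y, dist z y < R) (x : E) : (Y \ {x}).Nonempty := by
  obtain ⟨v, hv⟩ := exists_norm_eq E (by positivity : 0 ≤ 2 * R)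
  obtain ⟨y, hy, hyR⟩ := hY (x + v)
  refine ⟨y, hy, fun hyx => ?_⟩
  rw [Set.mem_singleton_iff.1 hyx, dist_self_add_left, hv] at hyR
  linarith

end Ray

section Lattice

variable {ι : Type*}

def intPoint (u : ι → ℤ) : EuclideanSpace ℝ ι := WithLp.toLp 2 fun i => (u i : ℝ)

@[simp] lemma intPoint_apply (u : ι → ℤ) (i : ι) : intPoint u i = u i := rfl

lemma range_intPoint :
    range (intPoint (ι := ι)) = {x : EuclideanSpace ℝ ι | ∀ i, ∃ z : ℤ, x i = z} := by
  ext x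
  refine ⟨?_, fun hx => ?_⟩
  · rintro ⟨u, rfl⟩ i
    exact ⟨u i, rfl⟩
  · choose u hu using hx
    exact ⟨u, by ext i; exact (hu i).symm⟩

lemma intPoint_add (u v : ι → ℤ) : intPoint (u + v) = intPoint u + intPoint v := by
  ext i; simp

lemma intPoint_sub (u v : ι → ℤ) : intPoint (u - v) = intPoint u - intPoint v := by
  ext i; simp

lemma abs_sub_apply_le_dist [Fintype ι] (x y : EuclideanSpace ℝ ι) (i : ι) :
    |x i - y i| ≤ dist x y := by
  simpa [Real.dist_eq] using PiLp.dist_apply_le x y i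

lemma le_dist_intPoint [Fintype ι] {u v : ι → ℤ} {c : ℤ} (i : ι) (h : c ≤ |u i - v i|) :
    (c : ℝ) ≤ dist (intPoint u) (intPoint v) :=
  (abs_sub_apply_le_dist _ _ i).trans' (by simp only [intPoint_apply]; exact_mod_cast h)

lemma inv_one_add_norm_le_dist [Fintype ι] {w δ : ι → ℤ} {i₁ : ι} (hw : w i₁ = 1)
    (hδ : ∀ j : ℕ, δ ≠ j • w) {s : ℝ} (hs : 0 ≤ s) :
    (1 + ‖intPoint w‖)⁻¹ ≤ dist (s • intPoint w) (intPoint δ) := by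
  set D := dist (s • intPoint w) (intPoint δ)
  have hcoord : ∀ i, |s * w i - δ i| ≤ D := fun i => by
    simpa using abs_sub_apply_le_dist (s • intPoint w) (intPoint δ) i
  have hD₁ : |s - δ i₁| ≤ D := by simpa [hw] using hcoord i₁
  rw [inv_le_iff_one_le_mul₀ (by positivity)]
  by_cases hline : δ = δ i₁ • w
  · have hneg : δ i₁ < 0 := by
      by_contra! h
      exact hδ (δ i₁).toNat (by rw [← natCast_zsmul, Int.toNat_of_nonneg h]; exact hline)
    have h1 : (1 : ℝ) ≤ |s - δ i₁| := by
      have : (δ i₁ : ℝ) ≤ -1 := by exact_mod_cast Int.le_sub_one_of_lt hneg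
      rw [abs_of_nonneg (by linarith)]
      linarith
    nlinarith [norm_nonneg (intPoint w)]
  · obtain ⟨i, hi⟩ : ∃ i, δ i ≠ δ i₁ * w i := by
      by_contra! h
      exact hline (funext fun i => by simp [h i])
    -- `δ i - δ i₁ * w i` is a nonzero integer controlled by the gaps in coordinates `i` and `i₁`
    have h1 : (1 : ℝ) ≤ |(δ i : ℝ) - δ i₁ * w i| := by
      exact_mod_cast Int.one_le_abs (sub_ne_zero.2 hi)
    have hwi : |(w i : ℝ)| ≤ ‖intPoint w‖ := by
      simpa using PiLp.norm_apply_le (intPoint w) i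
    have hsplit : (δ i : ℝ) - δ i₁ * w i = -(s * w i - δ i) + w i * (s - δ i₁) := by ring
    have : |(δ i : ℝ) - δ i₁ * w i| ≤ D + ‖intPoint w‖ * D := by
      rw [hsplit]
      refine (abs_add_le _ _).trans (add_le_add (by rw [abs_neg]; exact hcoord i) ?_)
      rw [abs_mul]
      exact mul_le_mul hwi hD₁ (abs_nonneg _) (norm_nonneg _)
    linarith

lemma norm_le_sqrt_card [Fintype ι] {x : EuclideanSpace ℝ ι} (h : ∀ i, |x i| ≤ 1) :
    ‖x‖ ≤ √(Fintype.card ι) := by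
  rw [EuclideanSpace.norm_eq]
  gcongr
  calc ∑ i, ‖x i‖ ^ 2 ≤ ∑ _i : ι, (1 : ℝ) :=
        Finset.sum_le_sum fun i _ => by
          rw [Real.norm_eq_abs]
          exact pow_le_one₀ (abs_nonneg _) (h i)
    _ = Fintype.card ι := by simp

lemma exists_dist_intPoint_le [Fintype ι] (x : EuclideanSpace ℝ ι) :
    ∃ u, dist x (intPoint u) ≤ √(Fintype.card ι) :=
  ⟨fun i => round (x i), by
    rw [dist_eq_norm]
    refine norm_le_sqrt_card fun i => ?_
    simpa using (abs_sub_round (x i)).trans (by norm_num)⟩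

lemma le_abs_sub_or_le_abs_sub {N : ℕ} {a a' j j' x x' y y' : ℤ} (ha' : 0 ≤ a') (hj : 1 ≤ j)
    (h : a' * (1 + N + |y| + |y'|) + (|x| + |x'| + N) ≤ a) :
    N ≤ |x + j * a - (x' + j' * a')| ∨ N ≤ |y + j - (y' + j')| := by
  refine or_iff_not_imp_right.2 fun hy => ?_
  replace hy := not_le.1 hy
  have hj'j : j' ≤ j - 1 + (1 + N + |y| + |y'|) := by
    have := neg_abs_le (y + j - (y' + j'))
    have := le_abs_self y
    have := neg_abs_le y'
    omega
  have hc : 0 ≤ |y| + |y'| + N := by positivity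
  have : j' * a' ≤ (j - 1 + (1 + N + |y| + |y'|)) * a' := mul_le_mul_of_nonneg_right hj'j ha'
  have : 0 ≤ (j - 1) * (a - a') :=
    mul_nonneg (by omega) (by nlinarith [abs_nonneg x, abs_nonneg x', mul_nonneg ha' hc])
  refine le_trans ?_ (le_abs_self _)
  nlinarith [neg_abs_le x, le_abs_self x']

section Growth

variable (e : ℕ ≃ (ι → ℤ)) (N : ℕ) (i₀ i₁ : ι)

def weight (n : ℕ) : ℤ := ∑ k ∈ Finset.range (n + 1), (|e k i₀| + |e k i₁| + N + 1)

/-- The factor `2 ^ n` makes the counting sum geometric; the power of the increasing `weight`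
makes each slope dominate every earlier one, in the sense of `slope_growth`. -/
def slope (u : ι → ℤ) : ℤ := 2 ^ e.symm u * weight e N i₀ i₁ (e.symm u) ^ (e.symm u + 1)

variable {e N i₀ i₁}

lemma weight_mono : Monotone (weight e N i₀ i₁) := fun _ _ h =>
  Finset.sum_le_sum_of_subset_of_nonneg (Finset.range_subset_range.2 (by omega))
    fun _ _ _ => by positivity

lemma add_le_weight (u : ι → ℤ) : |u i₀| + |u i₁| + N + 1 ≤ weight e N i₀ i₁ (e.symm u) := by
  simpa [weight] using Finset.single_le_sum (f := fun k => |e k i₀| + |e k i₁| + (N : ℤ) + 1)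
    (fun _ _ => by positivity) (Finset.self_mem_range_succ (e.symm u))

lemma add_add_le_weight {u u' : ι → ℤ} (h : e.symm u' < e.symm u) :
    (|u i₀| + |u i₁| + N + 1) + (|u' i₀| + |u' i₁| + N + 1) ≤ weight e N i₀ i₁ (e.symm u) := by
  have hsub : {e.symm u, e.symm u'} ⊆ Finset.range (e.symm u + 1) := by
    intro k hk
    simp only [Finset.mem_insert, Finset.mem_singleton] at hk
    rcases hk with rfl | rfl <;> simp only [Finset.mem_range] <;> omega
  have := Finset.sum_le_sum_of_subset_of_nonneg
    (f := fun k => |e k i₀| + |e k i₁| + (N : ℤ) + 1) hsub fun _ _ _ => by positivity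
  rw [Finset.sum_pair h.ne'] at this
  simpa [weight] using this

lemma one_le_weight (n : ℕ) : 1 ≤ weight e N i₀ i₁ n := by
  have := add_le_weight (e := e) (N := N) (i₀ := i₀) (i₁ := i₁) (e n)
  rw [e.symm_apply_apply] at this
  linarith [abs_nonneg (e n i₀), abs_nonneg (e n i₁)]

lemma mul_two_pow_add_abs_le_slope (u : ι → ℤ) :
    (N + 1) * 2 ^ e.symm u + |u i₀| ≤ slope e N i₀ i₁ u := by
  have hW := add_le_weight (e := e) (N := N) (i₀ := i₀) (i₁ := i₁) u
  have hpow : (1 : ℤ) ≤ 2 ^ e.symm u := one_le_pow₀ (by norm_num)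
  calc (N + 1) * 2 ^ e.symm u + |u i₀| ≤ 2 ^ e.symm u * weight e N i₀ i₁ (e.symm u) := by
        nlinarith [abs_nonneg (u i₀), abs_nonneg (u i₁)]
    _ ≤ slope e N i₀ i₁ u :=
        mul_le_mul_of_nonneg_left (le_self_pow₀ (one_le_weight _) (by omega)) (by positivity)

lemma slope_growth {u u' : ι → ℤ} (h : e.symm u' < e.symm u) :
    slope e N i₀ i₁ u' * (1 + N + |u i₁| + |u' i₁|) + (|u i₀| + |u' i₀| + N) ≤
      slope e N i₀ i₁ u := by
  set n := e.symm u
  set W := weight e N i₀ i₁ n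
  have hW : 1 ≤ W := one_le_weight n
  have hprev : slope e N i₀ i₁ u' ≤ 2 ^ n * W ^ n :=
    calc slope e N i₀ i₁ u' ≤ 2 ^ n * W ^ (e.symm u' + 1) :=
          mul_le_mul (pow_le_pow_right₀ (by norm_num) h.le)
            (pow_le_pow_left₀ (zero_le_one.trans (one_le_weight _)) (weight_mono h.le) _)
            (pow_nonneg (zero_le_one.trans (one_le_weight _)) _) (by positivity)
      _ ≤ 2 ^ n * W ^ n := mul_le_mul_of_nonneg_left (pow_le_pow_right₀ hW h) (by positivity)
  have hslope : slope e N i₀ i₁ u = 2 ^ n * W ^ n * W := by rw [slope, pow_succ, mul_assoc]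
  have hpos : 1 ≤ slope e N i₀ i₁ u' :=
    one_le_mul_of_one_le_of_one_le (one_le_pow₀ (by norm_num)) (one_le_pow₀ (one_le_weight _))
  have hsum := add_add_le_weight (i₀ := i₀) (i₁ := i₁) (N := N) h
  rw [hslope]
  nlinarith [abs_nonneg (u i₀), abs_nonneg (u' i₀), abs_nonneg (u i₁), abs_nonneg (u' i₁)]

end Growth

variable [DecidableEq ι]

def skewDir (i₀ i₁ : ι) (a : ℤ) : ι → ℤ := Pi.single i₀ a + Pi.single i₁ 1

lemma skewDir_apply_left {i₀ i₁ : ι} (h : i₀ ≠ i₁) (a : ℤ) : skewDir i₀ i₁ a i₀ = a := by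
  simp [skewDir, h]

lemma skewDir_apply_right {i₀ i₁ : ι} (h : i₀ ≠ i₁) (a : ℤ) : skewDir i₀ i₁ a i₁ = 1 := by
  simp [skewDir, h.symm]

/-- The removed set `Ỹ` of the paper. -/
def latticeRays (i₀ i₁ : ι) (a : (ι → ℤ) → ℤ) : Set (EuclideanSpace ℝ ι) :=
  {p | ∃ u : ι → ℤ, ∃ j : ℤ, 1 ≤ j ∧ p = intPoint (u + j • skewDir i₀ i₁ (a u))}

lemma latticeRays_subset_range (i₀ i₁ : ι) (a : (ι → ℤ) → ℤ) :
    latticeRays i₀ i₁ a ⊆ range intPoint := by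
  rintro _ ⟨u, j, -, rfl⟩
  exact mem_range_self _

variable [Fintype ι]

lemma isVisible_intPoint {i₀ i₁ : ι} (h : i₀ ≠ i₁) (a : (ι → ℤ) → ℤ) (u : ι → ℤ) :
    IsVisible (range intPoint \ latticeRays i₀ i₁ a) (intPoint u) := by
  set w := intPoint (skewDir i₀ i₁ (a u))
  have hw : ‖w‖ ≠ 0 := fun h0 => by
    simpa [w, skewDir_apply_right h] using congrArg (· i₁) (norm_eq_zero.1 h0)
  refine ⟨‖w‖⁻¹ • w, by simp [norm_smul, hw], (1 + ‖w‖)⁻¹, by positivity, ?_⟩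
  rintro _ ⟨t, ht, rfl⟩ _ ⟨⟨⟨z, rfl⟩, hz⟩, hzu⟩
  have hδ : ∀ j : ℕ, z - u ≠ j • skewDir i₀ i₁ (a u) := by
    rintro (_ | j) hj
    · exact hzu (by rw [sub_eq_iff_eq_add.1 hj, zero_smul, zero_add]; rfl)
    · refine hz ⟨u, j + 1, by omega, ?_⟩
      rw [eq_add_of_sub_eq' hj, ← natCast_zsmul]
      push_cast
      rfl
  calc (1 + ‖w‖)⁻¹ ≤ dist ((t * ‖w‖⁻¹) • w) (intPoint (z - u)) :=
        inv_one_add_norm_le_dist (skewDir_apply_right h _) hδ (by positivity)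
    _ = dist (intPoint u + t • ‖w‖⁻¹ • w) (intPoint z) := by
        rw [intPoint_sub, mul_smul, ← dist_add_left (intPoint u), add_sub_cancel]

lemma isVisible_of_notMem_range [Nontrivial ι] {Y : Set (EuclideanSpace ℝ ι)}
    (hY : Y ⊆ range intPoint) {x : EuclideanSpace ℝ ι} (hx : x ∉ range intPoint) :
    IsVisible Y x := by
  obtain ⟨i, hi⟩ : ∃ i, x i ∉ range ((↑) : ℤ → ℝ) := by
    by_contra! h
    choose u hu using h
    exact hx ⟨u, by ext i; exact hu i⟩
  obtain ⟨k, hk⟩ := exists_ne i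
  have hδ := (Real.isClosed_range_intCast.notMem_iff_infDist_pos ⟨0, 0, Int.cast_zero⟩).1 hi
  refine ⟨EuclideanSpace.single k 1, by simp, _, hδ, ?_⟩
  rintro _ ⟨t, -, rfl⟩ y ⟨hy, -⟩
  obtain ⟨z, rfl⟩ := hY hy
  calc infDist (x i) (range ((↑) : ℤ → ℝ)) ≤ |x i - z i| :=
        infDist_le_dist_of_mem (mem_range_self (z i))
    _ ≤ _ := by
        have hxi : (x + t • EuclideanSpace.single k 1 : EuclideanSpace ℝ ι) i = x i := by
          simp [hk.symm]
        rw [← hxi]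
        exact abs_sub_apply_le_dist _ (intPoint z) i

lemma isVisible_diff_latticeRays {i₀ i₁ : ι} (h : i₀ ≠ i₁) (a : (ι → ℤ) → ℤ)
    (x : EuclideanSpace ℝ ι) : IsVisible (range intPoint \ latticeRays i₀ i₁ a) x := by
  by_cases hx : x ∈ range intPoint
  · obtain ⟨u, rfl⟩ := hx
    exact isVisible_intPoint h a u
  · have : Nontrivial ι := ⟨⟨i₀, i₁, h⟩⟩
    exact isVisible_of_notMem_range sdiff_subset hx

lemma exists_mem_diff_dist_le_one [Nonempty ι] {S : Set (EuclideanSpace ℝ ι)}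
    (hS : ∀ p ∈ S, ∀ q ∈ S, p ≠ q → 1 < dist p q) (u : ι → ℤ) :
    ∃ y ∈ range intPoint \ S, dist (intPoint u) y ≤ 1 := by
  by_cases hu : intPoint u ∈ S
  · let i : ι := Classical.arbitrary ι
    have hv : dist (intPoint u) (intPoint (u + Pi.single i 1)) = 1 := by
      have : intPoint (Pi.single i 1) = EuclideanSpace.single i (1 : ℝ) := by
        ext k
        by_cases hk : k = i <;> simp [hk]
      rw [intPoint_add, dist_self_add_right, this, PiLp.norm_single, norm_one]
    refine ⟨_, ⟨mem_range_self _, fun hv' => ?_⟩, hv.le⟩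
    have := hS _ hu _ hv' fun h => by rw [h, dist_self] at hv; exact zero_ne_one hv
    linarith
  · exact ⟨intPoint u, ⟨mem_range_self u, hu⟩, by simp⟩

lemma forall_exists_mem_diff_dist_lt [Nonempty ι] {S : Set (EuclideanSpace ℝ ι)}
    (hS : ∀ p ∈ S, ∀ q ∈ S, p ≠ q → 1 < dist p q) (x : EuclideanSpace ℝ ι) :
    ∃ y ∈ range intPoint \ S, dist x y < √(Fintype.card ι) + 2 := by
  obtain ⟨u, hu⟩ := exists_dist_intPoint_le x
  obtain ⟨y, hy, hyu⟩ := exists_mem_diff_dist_le_one hS u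
  exact ⟨y, hy, by linarith [dist_triangle x (intPoint u) y]⟩

section Separation

variable {e : ℕ ≃ (ι → ℤ)} {N : ℕ} {i₀ i₁ : ι}

omit [Fintype ι] in
lemma le_abs_sub_of_symm_lt (h₀₁ : i₀ ≠ i₁) {u u' : ι → ℤ} {j j' : ℤ} (hj : 1 ≤ j)
    (h : e.symm u' < e.symm u) :
    ∃ i, (N : ℤ) ≤ |(u + j • skewDir i₀ i₁ (slope e N i₀ i₁ u)) i -
      (u' + j' • skewDir i₀ i₁ (slope e N i₀ i₁ u')) i| := by
  have ha' : 0 ≤ slope e N i₀ i₁ u' := le_trans (by positivity)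
    (mul_two_pow_add_abs_le_slope (i₁ := i₁) u')
  rcases le_abs_sub_or_le_abs_sub ha' hj (slope_growth h) with h | h
  · exact ⟨i₀, by simpa [skewDir_apply_left h₀₁] using h⟩
  · exact ⟨i₁, by simpa [skewDir_apply_right h₀₁] using h⟩

lemma le_dist_of_mem_latticeRays (h₀₁ : i₀ ≠ i₁) {p q : EuclideanSpace ℝ ι}
    (hp : p ∈ latticeRays i₀ i₁ (slope e N i₀ i₁)) (hq : q ∈ latticeRays i₀ i₁ (slope e N i₀ i₁))
    (hpq : p ≠ q) : (N : ℝ) ≤ dist p q := by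
  obtain ⟨u, j, hj, rfl⟩ := hp
  obtain ⟨u', j', hj', rfl⟩ := hq
  suffices ∃ i, (N : ℤ) ≤ |(u + j • skewDir i₀ i₁ (slope e N i₀ i₁ u)) i -
      (u' + j' • skewDir i₀ i₁ (slope e N i₀ i₁ u')) i| by
    obtain ⟨i, hi⟩ := this
    exact_mod_cast le_dist_intPoint i hi
  rcases lt_trichotomy (e.symm u') (e.symm u) with h | h | h
  · exact le_abs_sub_of_symm_lt h₀₁ hj h
  · obtain rfl := (e.symm.injective h).symm
    have hjj : j - j' ≠ 0 := sub_ne_zero.2 fun hjj => hpq (by rw [hjj])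
    refine ⟨i₀, ?_⟩
    have hN : (N : ℤ) ≤ slope e N i₀ i₁ u := by
      have h2 : (1 : ℤ) ≤ 2 ^ e.symm u := one_le_pow₀ (by norm_num)
      nlinarith [abs_nonneg (u i₀),
        mul_two_pow_add_abs_le_slope (e := e) (N := N) (i₀ := i₀) (i₁ := i₁) u]
    have : (u + j • skewDir i₀ i₁ (slope e N i₀ i₁ u)) i₀ -
        (u + j' • skewDir i₀ i₁ (slope e N i₀ i₁ u)) i₀ = (j - j') * slope e N i₀ i₁ u := by
      simp [skewDir_apply_left h₀₁]
      ring
    rw [this, abs_mul, abs_of_nonneg (hN.trans' (by positivity))]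
    nlinarith [Int.one_le_abs hjj]
  · obtain ⟨i, hi⟩ := le_abs_sub_of_symm_lt (N := N) (j' := j) h₀₁ hj' h
    exact ⟨i, by rwa [abs_sub_comm]⟩

end Separation

lemma card_Ico_one_ceil_le {t : ℝ} (ht : 0 ≤ t) : ((Finset.Ico 1 ⌈t⌉).card : ℝ) ≤ t := by
  rw [Int.card_Ico]
  have : (((⌈t⌉ - 1).toNat : ℤ) : ℝ) ≤ t := by
    rw [Int.toNat_eq_max]
    push_cast
    exact max_le (by linarith [Int.ceil_lt_add_one t]) ht
  exact_mod_cast this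

section Counting

variable {e : ℕ ≃ (ι → ℤ)} {i₀ i₁ : ι} {a : (ι → ℤ) → ℤ} {K : ℝ}

lemma mul_lt_of_mem_ball (h₀₁ : i₀ ≠ i₁) (ha : ∀ u, K * 2 ^ e.symm u + |(u i₀ : ℝ)| ≤ a u)
    {u : ι → ℤ} {j : ℤ} (hj : 1 ≤ j) {r : ℝ}
    (hr : intPoint (u + j • skewDir i₀ i₁ (a u)) ∈ ball 0 r) : j * (K * 2 ^ e.symm u) < r := by
  have hcoord : |(u i₀ : ℝ) + j * a u| < r := by
    simpa [skewDir_apply_left h₀₁] using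
      (abs_sub_apply_le_dist (intPoint (u + j • skewDir i₀ i₁ (a u))) 0 i₀).trans_lt hr
  have hj' : (0 : ℝ) ≤ j - 1 := by
    have : (1 : ℝ) ≤ j := by exact_mod_cast hj
    linarith
  have hau := ha u
  nlinarith [le_abs_self ((u i₀ : ℝ) + j * a u), neg_abs_le (u i₀ : ℝ),
    mul_le_mul_of_nonneg_left hau hj', abs_nonneg (u i₀ : ℝ)]

lemma ncard_latticeRays_inter_ball_le (h₀₁ : i₀ ≠ i₁) (hK : 0 < K)
    (ha : ∀ u, K * 2 ^ e.symm u + |(u i₀ : ℝ)| ≤ a u) {r : ℝ} (hr : 0 < r) :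
    ((latticeRays i₀ i₁ a ∩ ball 0 r).ncard : ℝ) ≤ 2 * r / K := by
  set t : ℕ → ℝ := fun n => r / (K * 2 ^ n)
  set F : Finset (EuclideanSpace ℝ ι) := (Finset.range ⌈r / K⌉₊).biUnion fun n =>
    (Finset.Ico 1 ⌈t n⌉).image fun j => intPoint (e n + j • skewDir i₀ i₁ (a (e n)))
  have hsub : latticeRays i₀ i₁ a ∩ ball 0 r ⊆ F := by
    rintro _ ⟨⟨u, j, hj, rfl⟩, hball⟩
    have hlt := mul_lt_of_mem_ball h₀₁ ha hj hball
    have h2n : (0 : ℝ) < K * 2 ^ e.symm u := by positivity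
    have hn : (e.symm u : ℝ) < 2 ^ e.symm u := by exact_mod_cast Nat.lt_two_pow_self
    have hj1 : (1 : ℝ) ≤ j := by exact_mod_cast hj
    rw [Finset.coe_biUnion]
    refine mem_iUnion₂.2 ⟨e.symm u, Finset.mem_range.2 (Nat.lt_ceil.2 ?_), ?_⟩
    · rw [lt_div_iff₀ hK]
      nlinarith
    · refine Finset.mem_image.2 ⟨j, Finset.mem_Ico.2 ⟨hj, Int.lt_ceil.2 ?_⟩, by simp⟩
      rw [lt_div_iff₀ h2n]
      exact hlt
  calc ((latticeRays i₀ i₁ a ∩ ball 0 r).ncard : ℝ) ≤ F.card := by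
        exact_mod_cast (Set.ncard_le_ncard hsub F.finite_toSet).trans (Set.ncard_coe_finset F).le
    _ ≤ ∑ n ∈ Finset.range ⌈r / K⌉₊, ((Finset.Ico 1 ⌈t n⌉).card : ℝ) := by
        exact_mod_cast Finset.card_biUnion_le.trans
          (Finset.sum_le_sum fun n _ => Finset.card_image_le)
    _ ≤ ∑ n ∈ Finset.range ⌈r / K⌉₊, r / K * (1 / 2) ^ n :=
        Finset.sum_le_sum fun n _ => (card_Ico_one_ceil_le (by positivity)).trans_eq <| by
          simp only [t, one_div, inv_pow]
          field_simp
    _ = r / K * ∑ n ∈ Finset.range ⌈r / K⌉₊, (1 / 2 : ℝ) ^ n := by rw [Finset.mul_sum]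
    _ ≤ r / K * 2 := by gcongr; exact sum_geometric_two_le _
    _ = 2 * r / K := by ring

end Counting

end Lattice

end Visibility

open Visibility in
theorem stmt9 (d : ℕ) (hd : 2 ≤ d) (ε M : ℝ) (hε : 0 < ε) (hM : 1 < M)
    (L : Set (EuclideanSpace ℝ (Fin d)))
    (hL : L = {x : EuclideanSpace ℝ (Fin d) | ∀ i : Fin d, ∃ z : ℤ, x i = (z : ℝ)}) :
    ∃ Y : Set (EuclideanSpace ℝ (Fin d)), Y ⊆ L ∧
      (∀ x : EuclideanSpace ℝ (Fin d), ∃ v ∈ sphere (0 : EuclideanSpace ℝ (Fin d)) 1,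
        0 < setDist (ray x v) (Y \ {x})) ∧
      (∀ r : ℝ, 0 < r →
        (((L \ Y) ∩ Metric.ball (0 : EuclideanSpace ℝ (Fin d)) r).ncard : ℝ) < ε * r) ∧
      (∃ R > (0 : ℝ), ∀ x : EuclideanSpace ℝ (Fin d), ∃ y ∈ Y, dist x y < R) ∧
      (∀ y₁ ∈ L \ Y, ∀ y₂ ∈ L \ Y, y₁ ≠ y₂ → M ≤ dist y₁ y₂) := by
  obtain rfl : L = range intPoint := hL.trans range_intPoint.symm
  let i₀ : Fin d := ⟨0, by omega⟩
  let i₁ : Fin d := ⟨1, by omega⟩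
  have h₀₁ : i₀ ≠ i₁ := by simp [i₀, i₁, Fin.ext_iff]
  have : Nonempty (Fin d) := ⟨i₀⟩
  let e : ℕ ≃ (Fin d → ℤ) := (Denumerable.ofEncodableOfInfinite (Fin d → ℤ)).eqv.symm
  -- `M ≤ N` gives the separation, `2 / ε < N + 1` the counting bound
  let N : ℕ := ⌈M⌉₊ + ⌈2 / ε⌉₊
  set S := latticeRays i₀ i₁ (slope e N i₀ i₁)
  have hMN : M ≤ N := (Nat.le_ceil M).trans (by exact_mod_cast Nat.le_add_right _ _)
  have hsep : ∀ p ∈ S, ∀ q ∈ S, p ≠ q → M ≤ dist p q := fun p hp q hq hpq =>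
    hMN.trans (le_dist_of_mem_latticeRays h₀₁ hp hq hpq)
  have hdense := forall_exists_mem_diff_dist_lt fun p hp q hq hpq =>
    hM.trans_le (hsep p hp q hq hpq)
  have hS : range intPoint \ (range intPoint \ S) = S :=
    sdiff_sdiff_cancel_left (latticeRays_subset_range i₀ i₁ _)
  refine ⟨range intPoint \ S, sdiff_subset, fun x => ?_, fun r hr => ?_, ⟨_, by positivity, hdense⟩,
    by rwa [hS]⟩
  · exact (isVisible_diff_latticeRays h₀₁ _ x).exists_setDist_pos
      (nonempty_diff_singleton_of_forall_dist_lt (by positivity) hdense x)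
  · have hN : 2 < ε * (N + 1) := by
      have hceil := (div_le_iff₀ hε).1 (Nat.le_ceil (2 / ε))
      have : (⌈2 / ε⌉₊ : ℝ) ≤ N := by exact_mod_cast Nat.le_add_left _ _
      nlinarith
    rw [hS]
    calc _ ≤ 2 * r / (N + 1) := ncard_latticeRays_inter_ball_le h₀₁ (by positivity)
          (fun u => by exact_mod_cast mul_two_pow_add_abs_le_slope u) hr
      _ < ε * r := by
        rw [div_lt_iff₀ (by positivity)]
        nlinarith
end

section
/- Let z ∈ ℤ², v = (m,1) with m a positive integer, and Y_z = {z + nv : n ≥ 1} ⊆ ℤ². Then z is visible for ℤ² \ Y_z; specifically, dist(L_{z,v/‖v‖}, (ℤ² \ Y_z) \ {z}) > 0. -/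
set_option maxHeartbeats 800000


open Metric Set MeasureTheory Filter Real

theorem stmt10 (z v : EuclideanSpace ℝ (Fin 2))
    (L : Set (EuclideanSpace ℝ (Fin 2)))
    (hL : L = {x : EuclideanSpace ℝ (Fin 2) | ∀ i : Fin 2, ∃ n : ℤ, x i = (n : ℝ)})
    (hz : z ∈ L) (m : ℤ) (hm : 1 ≤ m) (hv0 : v 0 = (m : ℝ)) (hv1 : v 1 = 1)
    (Yz : Set (EuclideanSpace ℝ (Fin 2)))
    (hYz : Yz = {p : EuclideanSpace ℝ (Fin 2) | ∃ n : ℕ, 1 ≤ n ∧ p = z + (n : ℝ) • v}) :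
    0 < setDist (ray z (‖v‖⁻¹ • v)) ((L \ Yz) \ {z}) := by
  have hm1 : (1:ℝ) ≤ (m:ℝ) := by exact_mod_cast hm
  have hs : ‖v‖ = Real.sqrt ((m:ℝ)^2 + 1) := by
    rw [EuclideanSpace.norm_eq, Fin.sum_univ_two, hv0, hv1]
    simp [Real.norm_eq_abs, sq_abs]
  set s : ℝ := Real.sqrt ((m:ℝ)^2 + 1) with hsdef
  have hs2 : s^2 = (m:ℝ)^2 + 1 := Real.sq_sqrt (by positivity)
  have hspos : 0 < s := Real.sqrt_pos.2 (by positivity)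
  have hs1 : 1 ≤ s := by nlinarith
  rw [hL] at hz
  obtain ⟨z0, hz0⟩ := hz 0
  obtain ⟨z1, hz1⟩ := hz 1
  -- witness point w = z - v
  have hwL : (z - v) ∈ L := by
    rw [hL]
    intro i
    fin_cases i
    · exact ⟨z0 - m, by simp [hz0, hv0]⟩
    · exact ⟨z1 - 1, by simp [hz1, hv1]⟩
  have hwY : (z - v) ∉ Yz := by
    rw [hYz]
    rintro ⟨n, hn, heq⟩
    have h1 : (z - v) 1 = (z + (n:ℝ) • v) 1 := by rw [heq]
    simp [hv1] at h1
    have hn1 : (1:ℝ) ≤ (n:ℝ) := by exact_mod_cast hn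
    linarith
  have hwz : (z - v) ≠ z := by
    intro h
    have h1 : (z - v) 1 = z 1 := by rw [h]
    simp [hv1] at h1
  have hzray : z ∈ ray z (‖v‖⁻¹ • v) := ⟨0, le_refl 0, by simp⟩
  have hne : (Set.image2 dist (ray z (‖v‖⁻¹ • v)) ((L \ Yz) \ {z})).Nonempty :=
    ⟨dist z (z - v), Set.mem_image2_of_mem hzray ⟨⟨hwL, hwY⟩, hwz⟩⟩
  have hbound : ∀ d ∈ Set.image2 dist (ray z (‖v‖⁻¹ • v)) ((L \ Yz) \ {z}), 1/s ≤ d := by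
    rintro d ⟨q, hq, p, hp, rfl⟩
    obtain ⟨⟨hpL, hpY⟩, hpz⟩ := hp
    rw [hL] at hpL
    obtain ⟨p0, hp0⟩ := hpL 0
    obtain ⟨p1, hp1⟩ := hpL 1
    obtain ⟨t, ht, rfl⟩ := hq
    set D : ℝ := dist (z + t • (‖v‖⁻¹ • v)) p with hD
    set u : ℝ := t * ‖v‖⁻¹ with hu
    have hu0 : 0 ≤ u := by positivity
    have hq0 : (z + t • (‖v‖⁻¹ • v)) 0 = z 0 + u * v 0 := by
      simp [PiLp.add_apply, PiLp.smul_apply, smul_eq_mul, hu]; ring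
    have hq1 : (z + t • (‖v‖⁻¹ • v)) 1 = z 1 + u * v 1 := by
      simp [PiLp.add_apply, PiLp.smul_apply, smul_eq_mul, hu]; ring
    set A : ℤ := p0 - z0 with hA
    set B : ℤ := p1 - z1 with hB
    have hd2 : D ^ 2 = (u * (m:ℝ) - (A:ℝ))^2 + (u - (B:ℝ))^2 := by
      rw [hD, EuclideanSpace.dist_eq, Fin.sum_univ_two,
        Real.sq_sqrt (by positivity), Real.dist_eq, Real.dist_eq, sq_abs, sq_abs,
        hq0, hq1, hp0, hp1, hz0, hz1, hv0, hv1]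
      push_cast [hA, hB]
      ring
    have hdn : 0 ≤ D := dist_nonneg
    have key : (1/s)^2 ≤ D ^ 2 := by
      rw [hd2]
      have h1s : (1/s)^2 = 1/((m:ℝ)^2+1) := by
        rw [div_pow, hs2]; ring
      rw [h1s]
      by_cases hcase : A = m * B
      · -- p is on the line; show B ≤ -1
        have hB0 : B ≠ 0 := by
          intro h0
          apply hpz
          have hA0 : A = 0 := by rw [hcase, h0, mul_zero]
          have hpz0 : (p0:ℝ) = (z0:ℝ) := by exact_mod_cast (by omega : p0 = z0)
          have hpz1 : (p1:ℝ) = (z1:ℝ) := by exact_mod_cast (by omega : p1 = z1)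
          have : p = z := by
            ext i
            fin_cases i
            · show p 0 = z 0
              rw [hp0, hz0, hpz0]
            · show p 1 = z 1
              rw [hp1, hz1, hpz1]
          exact this
        have hBneg : B ≤ -1 := by
          by_contra hc
          push_neg at hc
          have hB1 : 1 ≤ B := by omega
          apply hpY
          rw [hYz]
          have hBt1 : 1 ≤ B.toNat := by omega
          have hBt : ((B.toNat : ℕ) : ℝ) = (B:ℝ) := by
            have := Int.toNat_of_nonneg (by omega : (0:ℤ) ≤ B)
            exact_mod_cast this
          refine ⟨B.toNat, hBt1, ?_⟩
          have hAr : (A:ℝ) = (m:ℝ) * (B:ℝ) := by exact_mod_cast hcase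
          have hA' : (p0:ℝ) = (z0:ℝ) + (A:ℝ) := by push_cast [hA]; ring
          have hB' : (p1:ℝ) = (z1:ℝ) + (B:ℝ) := by push_cast [hB]; ring
          ext i
          fin_cases i
          · show p 0 = (z + ((B.toNat : ℕ) : ℝ) • v) 0
            simp only [PiLp.add_apply, PiLp.smul_apply, smul_eq_mul, hp0, hz0, hv0, hBt]
            rw [hA', hAr]; ring
          · show p 1 = (z + ((B.toNat : ℕ) : ℝ) • v) 1
            simp only [PiLp.add_apply, PiLp.smul_apply, smul_eq_mul, hp1, hz1, hv1, hBt]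
            rw [hB']; ring
        have hBr : (B:ℝ) ≤ -1 := by exact_mod_cast hBneg
        have hAr : (A:ℝ) = (m:ℝ) * (B:ℝ) := by exact_mod_cast hcase
        rw [hAr]
        have h1 : 1 ≤ u - (B:ℝ) := by linarith
        have hfac : (u * (m:ℝ) - (m:ℝ)*(B:ℝ))^2 + (u - (B:ℝ))^2
            = (u - (B:ℝ))^2 * ((m:ℝ)^2 + 1) := by ring
        rw [hfac, div_le_iff₀ (by positivity)]
        nlinarith
      · have h1 : 1 ≤ |A - m * B| := Int.one_le_abs (sub_ne_zero_of_ne hcase)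
        have h1r : 1 ≤ ((A:ℝ) - (m:ℝ)*(B:ℝ))^2 := by
          have h2 : (1:ℝ) ≤ |((A:ℝ) - (m:ℝ)*(B:ℝ))| := by
            exact_mod_cast h1
          nlinarith [sq_abs ((A:ℝ) - (m:ℝ)*(B:ℝ)), abs_nonneg ((A:ℝ) - (m:ℝ)*(B:ℝ))]
        rw [div_le_iff₀ (by positivity)]
        nlinarith [sq_nonneg ((m:ℝ) * (u * (m:ℝ) - (A:ℝ)) + (u - (B:ℝ)))]
    have h0s : 0 < 1/s := by positivity
    have := Real.sqrt_le_sqrt key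
    rwa [Real.sqrt_sq (le_of_lt h0s), Real.sqrt_sq hdn] at this
  have hle : 1/s ≤ setDist (ray z (‖v‖⁻¹ • v)) ((L \ Yz) \ {z}) := by
    rw [setDist]
    exact le_csInf hne hbound
  have : 0 < 1/s := by positivity
  linarith
end

section
/- Let Y ⊆ ℝ² be a discrete set with lim_{r→∞} r/G_Y(r) = 0, let v ∈ ℝ² be a nonzero vector and ε > 0. Then for almost every z ∈ Y (in density), there exist w ∈ Y \ {z} and an integer k ≥ 0 such that ‖(z − w) − kv‖ < ε. -/
open Metric Set MeasureTheory Filter Real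

/-!
If `z ≠ z'` are both exceptional then `‖z - z' - k • v‖ ≥ ε` for every integer `k` (for `k < 0`
swap the roles of `z` and `z'`), i.e. the exceptional points are `ε`-separated modulo `ℤ v`.
Cut the plane into strips of width `ε / 2` parallel to `v`, and each strip, modulo `ℤ v`, into
`O(‖v‖ / ε)` pieces: a cell contains at most one exceptional point, and `B(0, r)` meets `O(r)`
cells. Hence there are `O(r) = o(G_Y(r))` exceptional points in `B(0, r)`.
-/

open scoped RealInnerProductSpace
open Module

lemma pairwise_le_norm_sub_sub_intCast_smul {E : Type*} [SeminormedAddCommGroup E] [Module ℝ E]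
    (Y : Set E) (v : E) (ε : ℝ) :
    {z ∈ Y | ¬ ∃ w ∈ Y \ {z}, ∃ k : ℕ, ‖(z - w) - (k : ℝ) • v‖ < ε}.Pairwise
      fun z z' => ∀ k : ℤ, ε ≤ ‖z - z' - (k : ℝ) • v‖ := by
  rintro z ⟨hzY, hz⟩ z' ⟨hz'Y, hz'⟩ hne k
  push Not at hz hz'
  obtain ⟨n, rfl | rfl⟩ := Int.eq_nat_or_neg k
  · exact hz z' ⟨hz'Y, hne.symm⟩ n
  · calc ε ≤ ‖z' - z - (n : ℝ) • v‖ := hz' z ⟨hzY, hne⟩ n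
      _ = ‖z - z' - ((-n : ℤ) : ℝ) • v‖ := by
        rw [← norm_neg]; congr 1; push_cast; module

namespace Orientation

variable {E : Type*} [NormedAddCommGroup E] [InnerProductSpace ℝ E] [Fact (finrank ℝ E = 2)]
  (o : Orientation ℝ E (Fin 2))

local notation "ω" => o.areaForm

lemma norm_sq_mul_norm_sub_smul_sq (x v : E) (c : ℝ) :
    ‖v‖ ^ 2 * ‖x - c • v‖ ^ 2 = (⟪x, v⟫ - c * ‖v‖ ^ 2) ^ 2 + ω x v ^ 2 := by
  rw [mul_comm, ← o.inner_sq_add_areaForm_sq, inner_sub_left, real_inner_smul_left,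
    real_inner_self_eq_norm_sq]
  simp [o.areaForm_apply_self]

lemma norm_sub_smul_lt (x v : E) (c : ℝ) {ε : ℝ}
    (h_along : |⟪x, v⟫ - c * ‖v‖ ^ 2| < ‖v‖ * ε / 2) (h_across : |ω x v| < ‖v‖ * ε / 2) :
    ‖x - c • v‖ < ε := by
  have hpos : 0 < ‖v‖ * ε / 2 := (abs_nonneg _).trans_lt h_across
  have hv : 0 < ‖v‖ := (norm_nonneg v).lt_of_ne (by rintro h; simp [← h] at hpos)
  have hε : 0 < ε := by
    by_contra! h; linarith [mul_nonpos_of_nonneg_of_nonpos hv.le h]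
  have h_along2 := sq_lt_sq' (abs_lt.mp h_along).1 (abs_lt.mp h_along).2
  have h_across2 := sq_lt_sq' (abs_lt.mp h_across).1 (abs_lt.mp h_across).2
  have hsq : ‖v‖ ^ 2 * ‖x - c • v‖ ^ 2 < ‖v‖ ^ 2 * ε ^ 2 := by
    rw [o.norm_sq_mul_norm_sub_smul_sq]; nlinarith [sq_nonneg ε]
  exact lt_of_pow_lt_pow_left₀ 2 hε.le (lt_of_mul_lt_mul_left hsq (sq_nonneg _))

/-- The index of the strip parallel to `v`, of width `δ / ‖v‖`, that contains `z`, and of the bin,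
among `M`, of its coordinate along `v` modulo `ℤ v`. -/
noncomputable def cell (v : E) (δ : ℝ) (M : ℕ) (z : E) : ℤ × ℤ :=
  (⌊ω z v / δ⌋, ⌊Int.fract (⟪z, v⟫ / ‖v‖ ^ 2) * M⌋)

lemma mapsTo_cell {v : E} (hv : v ≠ 0) {δ : ℝ} (hδ : 0 < δ) {M : ℕ} (hM : 0 < M) {r : ℝ}
    {K : ℤ} (hK : ‖v‖ * r ≤ K * δ) :
    MapsTo (o.cell v δ M) (ball 0 r) ↑(Finset.Ico (-K) K ×ˢ Finset.Ico 0 (M : ℤ)) := by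
  intro z hz
  have hz : ‖z‖ * ‖v‖ < K * δ := by
    rw [mem_ball_zero_iff] at hz
    nlinarith [norm_pos_iff.mpr hv]
  have h_across := abs_lt.mp ((o.abs_areaForm_le z v).trans_lt hz)
  have h_fract := Int.fract_lt_one (⟪z, v⟫ / ‖v‖ ^ 2)
  have hM' : (0 : ℝ) < M := by exact_mod_cast hM
  simp only [cell, Finset.coe_product, mem_prod, Finset.coe_Ico, mem_Ico, Int.le_floor,
    Int.floor_lt, Int.cast_neg, Int.cast_zero, Int.cast_natCast, le_div_iff₀ hδ,
    div_lt_iff₀ hδ]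
  refine ⟨⟨by linarith, by linarith⟩, by positivity, by nlinarith⟩

lemma exists_close_of_cell_eq {v : E} (hv : v ≠ 0) {δ : ℝ} (hδ : 0 < δ) {M : ℕ} (hM : 0 < M)
    {z z' : E} (h : o.cell v δ M z = o.cell v δ M z') :
    |ω (z - z') v| < δ ∧ ∃ m : ℤ, |⟪z - z', v⟫ - m * ‖v‖ ^ 2| < ‖v‖ ^ 2 / M := by
  obtain ⟨h_across, h_along⟩ := Prod.ext_iff.mp h
  have h_across := Int.abs_sub_lt_one_of_floor_eq_floor h_across
  have h_along := Int.abs_sub_lt_one_of_floor_eq_floor h_along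
  have hv2 : 0 < ‖v‖ ^ 2 := by positivity
  have hM' : (0 : ℝ) < M := by exact_mod_cast hM
  refine ⟨?_, ⌊⟪z, v⟫ / ‖v‖ ^ 2⌋ - ⌊⟪z', v⟫ / ‖v‖ ^ 2⌋, ?_⟩
  · rwa [map_sub, LinearMap.sub_apply, ← div_lt_one hδ, ← abs_of_pos hδ, ← abs_div, sub_div]
  · have h_eq : ⟪z - z', v⟫ - (⌊⟪z, v⟫ / ‖v‖ ^ 2⌋ - ⌊⟪z', v⟫ / ‖v‖ ^ 2⌋ : ℤ) * ‖v‖ ^ 2 =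
        (Int.fract (⟪z, v⟫ / ‖v‖ ^ 2) * M - Int.fract (⟪z', v⟫ / ‖v‖ ^ 2) * M) * (‖v‖ ^ 2 / M) := by
      rw [inner_sub_left]; unfold Int.fract; push_cast; field_simp; ring
    rw [h_eq, abs_mul, abs_of_pos (div_pos hv2 hM')]
    exact mul_lt_of_lt_one_left (div_pos hv2 hM') h_along

lemma injOn_cell {v : E} (hv : v ≠ 0) {ε : ℝ} (hε : 0 < ε) {S : Set E}
    (hS : S.Pairwise fun z z' => ∀ k : ℤ, ε ≤ ‖z - z' - (k : ℝ) • v‖) :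
    InjOn (o.cell v (‖v‖ * ε / 2) ⌈2 * ‖v‖ / ε⌉₊) S := by
  have hv' := norm_pos_iff.mpr hv
  have hM : 0 < ⌈2 * ‖v‖ / ε⌉₊ := Nat.ceil_pos.mpr (by positivity)
  have h_bins : ‖v‖ ^ 2 / ⌈2 * ‖v‖ / ε⌉₊ ≤ ‖v‖ * ε / 2 := by
    rw [div_le_iff₀ (by exact_mod_cast hM)]
    calc ‖v‖ ^ 2 = ‖v‖ * ε / 2 * (2 * ‖v‖ / ε) := by field_simp
      _ ≤ ‖v‖ * ε / 2 * ⌈2 * ‖v‖ / ε⌉₊ := by gcongr; exact Nat.le_ceil _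
  intro z hz z' hz' h
  by_contra hne
  obtain ⟨h_across, m, h_along⟩ := o.exists_close_of_cell_eq hv (by positivity) hM h
  exact (hS hz hz' hne m).not_gt
    (o.norm_sub_smul_lt _ _ _ (h_along.trans_le h_bins) h_across)

end Orientation

theorem exists_ncard_inter_ball_le_mul {E : Type*} [NormedAddCommGroup E]
    [InnerProductSpace ℝ E] [Fact (finrank ℝ E = 2)] {v : E} (hv : v ≠ 0) {ε : ℝ} (hε : 0 < ε)
    {S : Set E} (hS : S.Pairwise fun z z' => ∀ k : ℤ, ε ≤ ‖z - z' - (k : ℝ) • v‖) :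
    ∃ C, ∀ r ≥ 1, ((S ∩ ball 0 r).ncard : ℝ) ≤ C * r := by
  have := FiniteDimensional.of_fact_finrank_eq_two (K := ℝ) (V := E)
  obtain ⟨o⟩ : Nonempty (Orientation ℝ E (Fin 2)) :=
    ⟨(finBasisOfFinrankEq ℝ E Fact.out).orientation⟩
  set M := ⌈2 * ‖v‖ / ε⌉₊
  have hv' := norm_pos_iff.mpr hv
  have hM : 0 < M := Nat.ceil_pos.mpr (by positivity)
  refine ⟨2 * (2 / ε + 1) * M, fun r hr => ?_⟩
  set K := ⌈2 * r / ε⌉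
  have hK : ‖v‖ * r ≤ K * (‖v‖ * ε / 2) := by
    calc ‖v‖ * r = 2 * r / ε * (‖v‖ * ε / 2) := by field_simp
      _ ≤ K * (‖v‖ * ε / 2) := by gcongr; exact Int.le_ceil _
  have hK0 : 0 ≤ K := Int.ceil_nonneg (by positivity)
  have h_card := ncard_le_ncard_of_injOn _
    (fun z hz => o.mapsTo_cell hv (by positivity) hM hK hz.2)
    ((o.injOn_cell hv hε hS).mono inter_subset_left)
  rw [ncard_coe_finset, Finset.card_product, Int.card_Ico, Int.card_Ico, sub_zero,
    Int.toNat_natCast] at h_card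
  calc ((S ∩ ball 0 r).ncard : ℝ) ≤ (((K - -K).toNat * M : ℕ) : ℝ) := by exact_mod_cast h_card
    _ = 2 * K * M := by
      rw [Nat.cast_mul, ← Int.cast_natCast, Int.toNat_of_nonneg (by omega)]; push_cast; ring
    _ ≤ 2 * (2 * r / ε + 1) * M := by
      gcongr; exact (Int.ceil_lt_add_one _).le
    _ ≤ 2 * ((2 / ε + 1) * r) * M := by
      gcongr; rw [add_mul, div_mul_eq_mul_div]; linarith
    _ = 2 * (2 / ε + 1) * M * r := by ring

theorem stmt12_general (Y : Set (EuclideanSpace ℝ (Fin 2)))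
    (hgrow : Tendsto (fun r : ℝ =>
        r / ((Y ∩ Metric.ball (0 : EuclideanSpace ℝ (Fin 2)) r).ncard : ℝ)) atTop (nhds 0))
    (v : EuclideanSpace ℝ (Fin 2)) (hv : v ≠ 0) (ε : ℝ) (hε : 0 < ε) :
    Tendsto (fun r : ℝ =>
        (({z ∈ Y | ¬ ∃ w ∈ Y \ {z}, ∃ k : ℕ, ‖(z - w) - (k : ℝ) • v‖ < ε} ∩
            Metric.ball (0 : EuclideanSpace ℝ (Fin 2)) r).ncard : ℝ) /
          ((Y ∩ Metric.ball (0 : EuclideanSpace ℝ (Fin 2)) r).ncard : ℝ))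
      atTop (nhds 0) := by
  have : Fact (finrank ℝ (EuclideanSpace ℝ (Fin 2)) = 2) := ⟨finrank_euclideanSpace_fin⟩
  obtain ⟨C, hC⟩ := exists_ncard_inter_ball_le_mul hv hε
    (pairwise_le_norm_sub_sub_intCast_smul Y v ε)
  refine squeeze_zero' (Eventually.of_forall fun r => by positivity) ?_
    (by simpa using hgrow.const_mul C)
  filter_upwards [eventually_ge_atTop 1] with r hr
  rw [← mul_div_assoc]
  exact div_le_div_of_nonneg_right (hC r hr) (Nat.cast_nonneg _)

theorem stmt12 (Y : Set (EuclideanSpace ℝ (Fin 2)))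
    (hdisc : ∀ (x : EuclideanSpace ℝ (Fin 2)) (r : ℝ), (Y ∩ Metric.ball x r).Finite)
    (hgrow : Tendsto (fun r : ℝ =>
        r / ((Y ∩ Metric.ball (0 : EuclideanSpace ℝ (Fin 2)) r).ncard : ℝ)) atTop (nhds 0))
    (v : EuclideanSpace ℝ (Fin 2)) (hv : v ≠ 0) (ε : ℝ) (hε : 0 < ε) :
    Tendsto (fun r : ℝ =>
        (({z ∈ Y | ¬ ∃ w ∈ Y \ {z}, ∃ k : ℕ, ‖(z - w) - (k : ℝ) • v‖ < ε} ∩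
            Metric.ball (0 : EuclideanSpace ℝ (Fin 2)) r).ncard : ℝ) /
          ((Y ∩ Metric.ball (0 : EuclideanSpace ℝ (Fin 2)) r).ncard : ℝ))
      atTop (nhds 0) :=
  stmt12_general Y hgrow v hv ε hε
end

section
/- Let Y ⊆ ℝ² be a uniformly separated set with lim_{r→∞} r/G_Y(r) = 0, let v ∈ ℝ² be nonzero, ε > 0 and M ≥ 1 an integer. Then for almost every z ∈ Y (in density), there exist w ∈ Y \ {z} and an integer k ≥ M with ‖(z − w) − kv‖ < ε. -/
open Metric Set MeasureTheory Filter Real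

private lemma finite_sep_ball {Y : Set (EuclideanSpace ℝ (Fin 2))} {δ : ℝ} (hδ : 0 < δ)
    (hsep : ∀ y₁ ∈ Y, ∀ y₂ ∈ Y, y₁ ≠ y₂ → δ ≤ dist y₁ y₂) (r : ℝ) :
    (Y ∩ Metric.ball (0 : EuclideanSpace ℝ (Fin 2)) r).Finite := by
  classical
  obtain ⟨t, htf, hcov⟩ := Metric.totallyBounded_iff.mp
    ((isCompact_closedBall (0 : EuclideanSpace ℝ (Fin 2)) r).totallyBounded) (δ / 2)
    (by linarith)
  set g : EuclideanSpace ℝ (Fin 2) → EuclideanSpace ℝ (Fin 2) := fun z =>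
    if h : ∃ y ∈ t, z ∈ Metric.ball y (δ / 2) then h.choose else z with hg
  have hmem : ∀ z ∈ Y ∩ Metric.ball (0 : EuclideanSpace ℝ (Fin 2)) r,
      g z ∈ t ∧ z ∈ Metric.ball (g z) (δ / 2) := by
    intro z hz
    have hz' : z ∈ ⋃ y ∈ t, Metric.ball y (δ / 2) := hcov (Metric.ball_subset_closedBall hz.2)
    simp only [Set.mem_iUnion, exists_prop] at hz'
    rw [hg]
    simp only [dif_pos hz']
    exact ⟨hz'.choose_spec.1, hz'.choose_spec.2⟩
  apply Set.Finite.of_finite_image (f := g)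
  · exact htf.subset (fun y hy => by
      obtain ⟨z, hz, rfl⟩ := hy
      exact (hmem z hz).1)
  · intro z hz z' hz' heq
    by_contra hne
    have h1 := (hmem z hz).2
    have h2 := (hmem z' hz').2
    rw [heq] at h1
    have : dist z z' < δ := by
      have := dist_triangle z (g z') z'
      rw [Metric.mem_ball] at h1 h2
      rw [dist_comm (g z') z'] at this
      linarith
    exact absurd (hsep z hz.1 z' hz'.1 hne) (not_le.mpr this)

set_option maxHeartbeats 1000000 in
theorem stmt13 (Y : Set (EuclideanSpace ℝ (Fin 2)))
    (hsep : ∃ δ > (0 : ℝ), ∀ y₁ ∈ Y, ∀ y₂ ∈ Y, y₁ ≠ y₂ → δ ≤ dist y₁ y₂)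
    (hgrow : Tendsto (fun r : ℝ =>
        r / ((Y ∩ Metric.ball (0 : EuclideanSpace ℝ (Fin 2)) r).ncard : ℝ)) atTop (nhds 0))
    (v : EuclideanSpace ℝ (Fin 2)) (hv : v ≠ 0) (ε : ℝ) (hε : 0 < ε)
    (M : ℕ) (hM : 1 ≤ M) :
    Tendsto (fun r : ℝ =>
        (({z ∈ Y | ¬ ∃ w ∈ Y \ {z}, ∃ k : ℕ, M ≤ k ∧ ‖(z - w) - (k : ℝ) • v‖ < ε} ∩
            Metric.ball (0 : EuclideanSpace ℝ (Fin 2)) r).ncard : ℝ) /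
          ((Y ∩ Metric.ball (0 : EuclideanSpace ℝ (Fin 2)) r).ncard : ℝ))
      atTop (nhds 0) := by
  classical
  obtain ⟨δ, hδ, hsepY⟩ := hsep
  have hvn : (0:ℝ) < ‖v‖ := norm_pos_iff.mpr hv
  set u : EuclideanSpace ℝ (Fin 2) := ‖v‖⁻¹ • v with hu_def
  have hv_eq : ∀ i, v i = ‖v‖ * u i := by
    intro i
    rw [hu_def]
    simp only [PiLp.smul_apply, smul_eq_mul]
    field_simp
  have normsq : ∀ x : EuclideanSpace ℝ (Fin 2), ‖x‖ ^ 2 = x 0 ^ 2 + x 1 ^ 2 := by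
    intro x
    rw [EuclideanSpace.norm_eq, Real.sq_sqrt (by positivity)]
    simp [Fin.sum_univ_two, sq_abs]
  have hu1 : u 0 ^ 2 + u 1 ^ 2 = 1 := by
    have h1 : ‖u‖ = 1 := norm_smul_inv_norm hv
    have := normsq u
    rw [h1] at this
    linarith
  have pyth : ∀ x : EuclideanSpace ℝ (Fin 2),
      ‖x‖ ^ 2 = (x 0 * u 0 + x 1 * u 1) ^ 2 + (x 1 * u 0 - x 0 * u 1) ^ 2 := by
    intro x
    rw [normsq x]
    linear_combination (x 0 ^ 2 + x 1 ^ 2) * hu1.symm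
  set m : ℝ := min δ ε with hm_def
  have hm : 0 < m := lt_min hδ hε
  set w : ℝ := m / 2 with hw_def
  have hw : 0 < w := by positivity
  set N : ℕ := ⌈2 * ‖v‖ / m⌉₊ + 1 with hN_def
  have hN0 : (0:ℝ) < N := by positivity
  have hNv : ‖v‖ / N ≤ m / 2 := by
    have h1 : 2 * ‖v‖ / m ≤ N := by
      rw [hN_def]; push_cast
      exact (Nat.le_ceil _).trans (by linarith)
    rw [div_le_div_iff₀ hN0 (by norm_num : (0:ℝ) < 2)]
    rw [div_le_iff₀ hm] at h1
    linarith
  set φc : EuclideanSpace ℝ (Fin 2) → ℝ := fun z => z 0 * u 0 + z 1 * u 1 with hφ_def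
  set ψc : EuclideanSpace ℝ (Fin 2) → ℝ := fun z => z 1 * u 0 - z 0 * u 1 with hψ_def
  set tc : EuclideanSpace ℝ (Fin 2) → ℝ := fun z => φc z / ‖v‖ with ht_def
  have sqlt : ∀ e c : ℝ, |e| < c → e ^ 2 < c ^ 2 := fun e c h =>
    sq_lt_sq' (neg_lt_of_abs_lt h) (lt_of_abs_lt h)
  have hsame : ∀ z z' : EuclideanSpace ℝ (Fin 2),
      ⌊ψc z / w⌋ = ⌊ψc z' / w⌋ →
      ⌊Int.fract (tc z) * N⌋ = ⌊Int.fract (tc z') * N⌋ →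
      ‖(z - z') - ((⌊tc z⌋ - ⌊tc z'⌋ : ℤ) : ℝ) • v‖ ^ 2 < m ^ 2 := by
    intro z z' h1 h2
    set k : ℤ := ⌊tc z⌋ - ⌊tc z'⌋ with hk_def
    set x : EuclideanSpace ℝ (Fin 2) := (z - z') - ((k : ℤ) : ℝ) • v with hx_def
    have hxi : ∀ i, x i = z i - z' i - (k : ℝ) * v i := by
      intro i
      rw [hx_def]
      simp [PiLp.sub_apply, PiLp.smul_apply, smul_eq_mul]
    set a : ℝ := Int.fract (tc z) - Int.fract (tc z') with ha_def
    have hvu : v 0 * u 0 + v 1 * u 1 = ‖v‖ := by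
      rw [hv_eq 0, hv_eq 1]
      linear_combination ‖v‖ * hu1
    have hvu' : v 1 * u 0 - v 0 * u 1 = 0 := by
      rw [hv_eq 0, hv_eq 1]; ring
    have hφz : ∀ y : EuclideanSpace ℝ (Fin 2), φc y = ‖v‖ * tc y := by
      intro y
      rw [ht_def]
      field_simp
    have hfr : ∀ y : EuclideanSpace ℝ (Fin 2), tc y = ⌊tc y⌋ + Int.fract (tc y) := by
      intro y
      rw [Int.fract]; ring
    have hkr : ((k:ℤ):ℝ) = ((⌊tc z⌋ : ℤ):ℝ) - ((⌊tc z'⌋ : ℤ):ℝ) := by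
      rw [hk_def]; push_cast; ring
    have hφx : x 0 * u 0 + x 1 * u 1 = ‖v‖ * a := by
      rw [hxi 0, hxi 1, ha_def, hkr]
      have e1 := hφz z
      have e2 := hφz z'
      rw [hφ_def] at e1 e2
      simp only at e1 e2
      have e3 := hfr z
      have e4 := hfr z'
      linear_combination e1 - e2 + ‖v‖ * e3 - ‖v‖ * e4 - (((⌊tc z⌋ : ℤ):ℝ) - ((⌊tc z'⌋ : ℤ):ℝ)) * hvu
    have hψx : x 1 * u 0 - x 0 * u 1 = ψc z - ψc z' := by
      rw [hxi 0, hxi 1, hψ_def, hkr]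
      simp only
      linear_combination (-(((⌊tc z⌋ : ℤ):ℝ) - ((⌊tc z'⌋ : ℤ):ℝ))) * hvu'
    have hb1 : |a| * N < 1 := by
      have := Int.abs_sub_lt_one_of_floor_eq_floor h2
      rw [ha_def]
      calc |Int.fract (tc z) - Int.fract (tc z')| * N
          = |Int.fract (tc z) * N - Int.fract (tc z') * N| := by
            rw [← sub_mul, abs_mul, abs_of_pos hN0]
        _ < 1 := this
    have hb2 : |ψc z - ψc z'| < w := by
      have h3 := Int.abs_sub_lt_one_of_floor_eq_floor h1
      have : |ψc z / w - ψc z' / w| = |ψc z - ψc z'| / w := by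
        rw [← sub_div, abs_div, abs_of_pos hw]
      rw [this, div_lt_one hw] at h3
      exact h3
    have hva : |‖v‖ * a| < m / 2 := by
      have h4 : |a| < 1 / N := by
        rw [lt_div_iff₀ hN0]; exact hb1
      calc |‖v‖ * a| = ‖v‖ * |a| := by rw [abs_mul, abs_of_pos hvn]
        _ < ‖v‖ * (1 / N) := by exact mul_lt_mul_of_pos_left h4 hvn
        _ = ‖v‖ / N := by ring
        _ ≤ m / 2 := hNv
    have e5 : (‖v‖ * a) ^ 2 < (m/2) ^ 2 := sqlt _ _ hva
    have e6 : (ψc z - ψc z') ^ 2 < w ^ 2 := sqlt _ _ hb2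
    rw [pyth x, hφx, hψx]
    rw [hw_def] at e6
    calc (‖v‖ * a) ^ 2 + (ψc z - ψc z') ^ 2 < (m/2)^2 + (m/2)^2 := add_lt_add e5 e6
      _ < m ^ 2 := by nlinarith [hm]
  -- the bad set
  set Bad : Set (EuclideanSpace ℝ (Fin 2)) :=
    {z ∈ Y | ¬ ∃ w ∈ Y \ {z}, ∃ k : ℕ, M ≤ k ∧ ‖(z - w) - (k : ℝ) • v‖ < ε} with hBad_def
  have hBadY : Bad ⊆ Y := fun z hz => hz.1
  set C : ℝ := (M : ℝ) * (2 / w + 2) * N with hC_def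
  have hC0 : 0 ≤ C := by positivity
  -- counting estimate
  have hcount : ∀ r : ℝ, 1 ≤ r →
      ((Bad ∩ Metric.ball (0 : EuclideanSpace ℝ (Fin 2)) r).ncard : ℝ) ≤ C * r := by
    intro r hr
    have hr0 : 0 < r := by linarith
    have hfinB : (Bad ∩ Metric.ball (0 : EuclideanSpace ℝ (Fin 2)) r).Finite :=
      (finite_sep_ball hδ hsepY r).subset (Set.inter_subset_inter_left _ hBadY)
    set F : Finset (EuclideanSpace ℝ (Fin 2)) := hfinB.toFinset with hF_def
    set f : EuclideanSpace ℝ (Fin 2) → ℤ × ℤ :=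
      fun z => (⌊ψc z / w⌋, ⌊Int.fract (tc z) * N⌋) with hf_def
    set S : Finset (ℤ × ℤ) :=
      Finset.Icc (⌊-(r/w)⌋) ⌊r/w⌋ ×ˢ Finset.Icc (0:ℤ) ((N:ℤ) - 1) with hS_def
    have hmemF : ∀ z, z ∈ F ↔ z ∈ Bad ∩ Metric.ball (0 : EuclideanSpace ℝ (Fin 2)) r := by
      intro z; rw [hF_def]; exact Set.Finite.mem_toFinset _
    have hmaps : ∀ z ∈ F, f z ∈ S := by
      intro z hz
      obtain ⟨hzB, hzb⟩ := (hmemF z).mp hz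
      have hnz : ‖z‖ < r := mem_ball_zero_iff.mp hzb
      have hψ2 : (ψc z) ^ 2 ≤ ‖z‖ ^ 2 := by
        have h := pyth z
        have : ψc z = z 1 * u 0 - z 0 * u 1 := rfl
        rw [this]
        linarith [sq_nonneg (z 0 * u 0 + z 1 * u 1)]
      have hψle : |ψc z| ≤ ‖z‖ := by
        rw [← Real.sqrt_sq_eq_abs, ← Real.sqrt_sq (norm_nonneg z)]
        exact Real.sqrt_le_sqrt hψ2
      have hψlt : -r ≤ ψc z ∧ ψc z ≤ r := by
        constructor <;> [linarith [neg_abs_le (ψc z)]; linarith [le_abs_self (ψc z)]]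
      rw [hS_def, Finset.mem_product]
      constructor
      · rw [Finset.mem_Icc]
        constructor
        · apply Int.floor_le_floor
          rw [← neg_div]
          gcongr
          exact hψlt.1
        · apply Int.floor_le_floor
          gcongr
          exact hψlt.2
      · rw [Finset.mem_Icc]
        show (0:ℤ) ≤ ⌊Int.fract (tc z) * (N:ℝ)⌋ ∧ ⌊Int.fract (tc z) * (N:ℝ)⌋ ≤ (N:ℤ) - 1
        have h0 : (0:ℤ) ≤ ⌊Int.fract (tc z) * (N:ℝ)⌋ :=
          Int.floor_nonneg.mpr (mul_nonneg (Int.fract_nonneg _) hN0.le)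
        have h1 : ⌊Int.fract (tc z) * (N:ℝ)⌋ < (N:ℤ) := by
          apply Int.floor_lt.mpr
          have h2 : Int.fract (tc z) * (N:ℝ) < 1 * N :=
            mul_lt_mul_of_pos_right (Int.fract_lt_one _) hN0
          rw [one_mul] at h2
          exact_mod_cast h2
        exact ⟨h0, by omega⟩
    have hfiber : ∀ p ∈ S, (F.filter (fun z => f z = p)).card ≤ M := by
      intro p _
      by_contra hcard
      push_neg at hcard
      set G : Finset (EuclideanSpace ℝ (Fin 2)) := F.filter (fun z => f z = p) with hG_def
      have hGB : ∀ z ∈ G, z ∈ Bad := by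
        intro z hz
        exact ((hmemF z).mp (Finset.mem_filter.mp hz).1).1
      have hGsame : ∀ z ∈ G, ∀ z' ∈ G,
          ⌊ψc z / w⌋ = ⌊ψc z' / w⌋ ∧ ⌊Int.fract (tc z) * N⌋ = ⌊Int.fract (tc z') * N⌋ := by
        intro z hz z' hz'
        have e1 := (Finset.mem_filter.mp hz).2
        have e2 := (Finset.mem_filter.mp hz').2
        have : f z = f z' := e1.trans e2.symm
        rw [hf_def] at this
        exact ⟨congrArg Prod.fst this, congrArg Prod.snd this⟩
      have hinj : Set.InjOn (fun z => ⌊tc z⌋) ↑G := by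
        intro z hz z' hz' heq
        by_contra hne
        simp only at heq
        obtain ⟨c1, c2⟩ := hGsame z (Finset.mem_coe.mp hz) z' (Finset.mem_coe.mp hz')
        have h := hsame z z' c1 c2
        rw [heq, sub_self] at h
        simp only [Int.cast_zero, zero_smul, sub_zero] at h
        have hY1 : z ∈ Y := hBadY (hGB z (Finset.mem_coe.mp hz))
        have hY2 : z' ∈ Y := hBadY (hGB z' (Finset.mem_coe.mp hz'))
        have hd : δ ≤ ‖z - z'‖ := by
          rw [← dist_eq_norm]; exact hsepY z hY1 z' hY2 hne
        have h5 : δ ^ 2 ≤ ‖z - z'‖ ^ 2 := pow_le_pow_left₀ hδ.le hd 2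
        have hmδ : m ≤ δ := min_le_left _ _
        have h6 : m ^ 2 ≤ δ ^ 2 := pow_le_pow_left₀ hm.le hmδ 2
        linarith
      have hcard2 : M < (G.image (fun z => ⌊tc z⌋)).card := by
        rwa [Finset.card_image_of_injOn hinj]
      have hne2 : (G.image (fun z => ⌊tc z⌋)).Nonempty := Finset.card_pos.mp (by omega)
      set A := Finset.max' _ hne2 with hA_def
      set B := Finset.min' _ hne2 with hB_def
      have hsub : G.image (fun z => ⌊tc z⌋) ⊆ Finset.Icc B A := by
        intro x hx
        exact Finset.mem_Icc.mpr ⟨Finset.min'_le _ _ hx, Finset.le_max' _ _ hx⟩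
      have hcard3 : (G.image (fun z => ⌊tc z⌋)).card ≤ (A + 1 - B).toNat := by
        rw [← Int.card_Icc]
        exact Finset.card_le_card hsub
      have hAB : (M:ℤ) ≤ A - B := by omega
      obtain ⟨z, hzG, hza⟩ := Finset.mem_image.mp (Finset.max'_mem _ hne2)
      obtain ⟨z', hz'G, hz'b⟩ := Finset.mem_image.mp (Finset.min'_mem _ hne2)
      have hzz' : z ≠ z' := by
        intro h
        rw [h, hz'b] at hza
        omega
      obtain ⟨hzY, hzP⟩ := hGB z hzG
      apply hzP
      refine ⟨z', ⟨hBadY (hGB z' hz'G), ?_⟩, (A - B).toNat, ?_, ?_⟩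
      · simp only [Set.mem_singleton_iff]
        exact fun h => hzz' h.symm
      · omega
      · have hcast : (((A - B).toNat : ℕ) : ℝ) = ((A - B : ℤ) : ℝ) := by
          rw [← Int.cast_natCast, Int.toNat_of_nonneg (by omega)]
        rw [hcast]
        obtain ⟨c1, c2⟩ := hGsame z hzG z' hz'G
        have h := hsame z z' c1 c2
        rw [hza, hz'b] at h
        have hmε : m ≤ ε := min_le_right _ _
        have h6 : m ^ 2 ≤ ε ^ 2 := pow_le_pow_left₀ hm.le hmε 2
        have h2 : ‖(z - z') - ((A - B : ℤ) : ℝ) • v‖ ^ 2 < ε ^ 2 := by linarith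
        exact lt_of_pow_lt_pow_left₀ 2 hε.le h2
    have hFcard : F.card ≤ M * S.card :=
      Finset.card_le_mul_card_image_of_maps_to hmaps M hfiber
    have hScard : S.card = (⌊r/w⌋ + 1 - ⌊-(r/w)⌋).toNat * N := by
      rw [hS_def, Finset.card_product, Int.card_Icc, Int.card_Icc]
      congr 1
      omega
    have hncard : (Bad ∩ Metric.ball (0 : EuclideanSpace ℝ (Fin 2)) r).ncard = F.card :=
      Set.ncard_eq_toFinset_card _ hfinB
    rw [hncard]
    have hrw : 0 < r / w := div_pos hr0 hw
    have hnn : (0:ℤ) ≤ ⌊r/w⌋ + 1 - ⌊-(r/w)⌋ := by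
      have := Int.floor_le_floor (show -(r/w) ≤ r/w by linarith)
      omega
    have hIcc : ((⌊r/w⌋ + 1 - ⌊-(r/w)⌋).toNat : ℝ) ≤ 2 * r / w + 2 := by
      have h1 : ((⌊r/w⌋ + 1 - ⌊-(r/w)⌋).toNat : ℝ) = ((⌊r/w⌋:ℝ) + 1 - (⌊-(r/w)⌋:ℝ)) := by
        rw [← Int.cast_natCast, Int.toNat_of_nonneg hnn]
        push_cast
        ring
      rw [h1]
      have h2 : (⌊r/w⌋:ℝ) ≤ r/w := Int.floor_le _
      have h3 : -(r/w) - 1 < (⌊-(r/w)⌋:ℝ) := Int.sub_one_lt_floor _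
      have h4 : 2 * r / w = r/w + r/w := by ring
      linarith
    calc (F.card : ℝ) ≤ ((M * S.card : ℕ) : ℝ) := by exact_mod_cast hFcard
      _ = (M:ℝ) * (((⌊r/w⌋ + 1 - ⌊-(r/w)⌋).toNat : ℝ) * N) := by
          rw [hScard]; push_cast; ring
      _ ≤ (M:ℝ) * ((2 * r / w + 2) * N) := by
          apply mul_le_mul_of_nonneg_left ?_ (Nat.cast_nonneg M)
          exact mul_le_mul_of_nonneg_right hIcc hN0.le
      _ = ((M:ℝ) * N) * (2 * r / w + 2) := by ring
      _ ≤ ((M:ℝ) * N) * ((2 / w + 2) * r) := by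
          apply mul_le_mul_of_nonneg_left ?_ (by positivity)
          have e : 2 * r / w = 2 / w * r := by ring
          rw [e]
          nlinarith [hr]
      _ = C * r := by rw [hC_def]; ring
  have hmain : ∀ᶠ r in atTop,
      ((Bad ∩ Metric.ball (0 : EuclideanSpace ℝ (Fin 2)) r).ncard : ℝ) /
        ((Y ∩ Metric.ball (0 : EuclideanSpace ℝ (Fin 2)) r).ncard : ℝ) ≤
      C * (r / ((Y ∩ Metric.ball (0 : EuclideanSpace ℝ (Fin 2)) r).ncard : ℝ)) := by
    filter_upwards [eventually_ge_atTop (1:ℝ)] with r hr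
    rcases eq_or_lt_of_le
      (Nat.cast_nonneg ((Y ∩ Metric.ball (0 : EuclideanSpace ℝ (Fin 2)) r).ncard) :
        (0:ℝ) ≤ _) with h0 | h0
    · have hzero : (Y ∩ Metric.ball (0 : EuclideanSpace ℝ (Fin 2)) r).ncard = 0 := by
        exact_mod_cast h0.symm
      have hempty : (Y ∩ Metric.ball (0 : EuclideanSpace ℝ (Fin 2)) r) = ∅ :=
        (Set.ncard_eq_zero (finite_sep_ball hδ hsepY r)).mp hzero
      have hsub := Set.inter_subset_inter_left (Metric.ball (0 : EuclideanSpace ℝ (Fin 2)) r) hBadY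
      rw [hempty] at hsub
      have hBe : (Bad ∩ Metric.ball (0 : EuclideanSpace ℝ (Fin 2)) r) = ∅ :=
        Set.subset_empty_iff.mp hsub
      rw [hBe]
      simp only [Set.ncard_empty, Nat.cast_zero, zero_div]
      rw [← h0, div_zero, mul_zero]
    · rw [← mul_div_assoc]
      gcongr
      exact hcount r hr
  refine squeeze_zero' (Eventually.of_forall fun r => by positivity) hmain ?_
  have hlim := hgrow.const_mul C
  simpa using hlim
end

section
/- Let ε > 0, let Y ⊆ ℝ² be uniformly separated with lim_{T→∞} T/G_Y(T) = 0, let Γ = (V,E) be a finite tree with vertex set V = {x₀,…,x_m} ⊆ ℝ². Then for almost every y₀ ∈ Y (in density), there is a map f : V → Y with f(x₀) = y₀ such that for every edge {x_i, x_j} ∈ E there is an integer k_{ij} ≥ 1 with ‖(f(x_i) − f(x_j)) − k_{ij}(x_i − x_j)‖ < ε. -/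
/-!
Fix `w ≠ 0` and a `δ`-separated set `D`, and call `y ∈ D` bad if no `y' ∈ D` lies within `ε` of
`y + k w` for an integer `k ≥ 1`. Label points by their cell in a grid of mesh
`τ ≤ min δ ε / 2` on the cylinder `ℝ² / ℤ w`. Two bad points with the same label differ by `k w`
up to less than `2 τ` for some integer `k`: `k = 0` contradicts the separation, `k ≠ 0` the
badness of one of them. So the bad points of `B(0, T)` are at most as many as the `O(T)` cells
met by that ball, while `G_Y(T) / T → ∞`.

Orient the tree away from `x₀`. Going up from the leaves, the points of `Y` at which a vertex can
be placed so that the subtree below it can still be mapped lose `O(T)` points of each ball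
`B(0, T)` per step; from such a point `y₀` at `x₀` the map is built from the root downwards.
-/

open Metric Set MeasureTheory Filter Real

local notation "E2" => EuclideanSpace ℝ (Fin 2)

lemma abs_sub_lt_of_floor_div_eq {c x y : ℝ} (hc : 0 < c) (h : ⌊x / c⌋ = ⌊y / c⌋) :
    |x - y| < c := by
  have := Int.abs_sub_lt_one_of_floor_eq_floor h
  rwa [← sub_div, abs_div, abs_of_pos hc, div_lt_one hc] at this

lemma floor_div_mem_Icc {a b c x : ℝ} (hc : 0 < c) (ha : a ≤ x) (hb : x ≤ b) :
    ⌊x / c⌋ ∈ Finset.Icc ⌊a / c⌋ ⌊b / c⌋ :=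
  Finset.mem_Icc.2 ⟨Int.floor_mono (by gcongr), Int.floor_mono (by gcongr)⟩

lemma card_Icc_floor_div_le {a b c : ℝ} (hc : 0 < c) (hab : a ≤ b) :
    ((Finset.Icc ⌊a / c⌋ ⌊b / c⌋).card : ℝ) ≤ (b - a) / c + 2 := by
  have hle : ⌊a / c⌋ ≤ ⌊b / c⌋ := Int.floor_mono (by gcongr)
  rw [Int.card_Icc, ← Int.cast_natCast, Int.toNat_of_nonneg (by omega), sub_div]
  push_cast
  linarith [Int.floor_le (b / c), Int.sub_one_lt_floor (a / c)]

def LinearlySparse {E : Type*} [SeminormedAddCommGroup E] (S : Set E) : Prop :=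
  ∃ C : ℝ, ∀ T : ℝ, 0 ≤ T → (S ∩ ball 0 T).Finite ∧ ((S ∩ ball 0 T).ncard : ℝ) ≤ C * (T + 1)

namespace LinearlySparse

variable {E : Type*} [SeminormedAddCommGroup E] {S S' : Set E}

lemma empty : LinearlySparse (∅ : Set E) :=
  ⟨0, fun T _ => by simp⟩

lemma mono (h : LinearlySparse S) (hS' : S' ⊆ S) : LinearlySparse S' := by
  obtain ⟨C, hC⟩ := h
  refine ⟨C, fun T hT => ?_⟩
  obtain ⟨hfin, hcard⟩ := hC T hT
  have hsub : S' ∩ ball 0 T ⊆ S ∩ ball 0 T := inter_subset_inter_left _ hS'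
  exact ⟨hfin.subset hsub, le_trans (by exact_mod_cast ncard_le_ncard hsub hfin) hcard⟩

lemma union (h : LinearlySparse S) (h' : LinearlySparse S') : LinearlySparse (S ∪ S') := by
  obtain ⟨C, hC⟩ := h
  obtain ⟨C', hC'⟩ := h'
  refine ⟨C + C', fun T hT => ?_⟩
  obtain ⟨hfin, hcard⟩ := hC T hT
  obtain ⟨hfin', hcard'⟩ := hC' T hT
  rw [union_inter_distrib_right]
  refine ⟨hfin.union hfin', ?_⟩
  calc (((S ∩ ball 0 T) ∪ (S' ∩ ball 0 T)).ncard : ℝ)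
      ≤ (S ∩ ball 0 T).ncard + (S' ∩ ball 0 T).ncard := by exact_mod_cast ncard_union_le _ _
    _ ≤ (C + C') * (T + 1) := by linarith

lemma iUnion {ι : Type*} [Finite ι] {S : ι → Set E} (h : ∀ i, LinearlySparse (S i)) :
    LinearlySparse (⋃ i, S i) := by
  have := Fintype.ofFinite ι
  suffices ∀ s : Finset ι, LinearlySparse (⋃ i ∈ s, S i) by simpa using this Finset.univ
  intro s
  induction s using Finset.cons_induction with
  | empty => simpa using empty
  | cons i s _ ih => simpa [Finset.cons_eq_insert, Finset.set_biUnion_insert] using (h i).union ih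

lemma tendsto_ncard_div (h : LinearlySparse S) {Y : Set E}
    (hY : Tendsto (fun T : ℝ => T / ((Y ∩ ball 0 T).ncard : ℝ)) atTop (nhds 0)) :
    Tendsto (fun T : ℝ => ((S ∩ ball 0 T).ncard : ℝ) / ((Y ∩ ball 0 T).ncard : ℝ))
      atTop (nhds 0) := by
  obtain ⟨C, hC⟩ := h
  have hC0 : 0 ≤ C := by simpa using (hC 0 le_rfl).2
  have hupper := hY.const_mul (2 * C)
  rw [mul_zero] at hupper
  refine tendsto_of_tendsto_of_tendsto_of_le_of_le' tendsto_const_nhds hupper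
    (Eventually.of_forall fun T => by positivity) ?_
  filter_upwards [eventually_ge_atTop (1 : ℝ)] with T hT
  rw [← mul_div_assoc]
  exact div_le_div_of_nonneg_right (by nlinarith [(hC T (by linarith)).2]) (Nat.cast_nonneg _)

end LinearlySparse

def NearMultiple {E : Type*} [SeminormedAddCommGroup E] [NormedSpace ℝ E] (ε : ℝ) (u v : E) :
    Prop :=
  ∃ k : ℕ, 1 ≤ k ∧ ‖u - (k : ℝ) • v‖ < ε

lemma NearMultiple.neg {E : Type*} [SeminormedAddCommGroup E] [NormedSpace ℝ E] {ε : ℝ}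
    {u v : E} (h : NearMultiple ε u v) : NearMultiple ε (-u) (-v) := by
  obtain ⟨k, hk, hlt⟩ := h
  exact ⟨k, hk, by rwa [smul_neg, ← neg_sub', norm_neg]⟩

section Frame

variable (w : E2)

noncomputable def alongCoord (y : E2) : ℝ := (y 0 * w 0 + y 1 * w 1) / ‖w‖ ^ 2

noncomputable def acrossCoord (y : E2) : ℝ := (y 1 * w 0 - y 0 * w 1) / ‖w‖

/-- The cell of mesh `τ` containing the image of `y` on the cylinder `ℝ² / ℤ w`. Since
`alongCoord w w = 1`, the second coordinate `‖w‖ * fract (alongCoord w y)` is arc length around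
the cylinder. -/
noncomputable def cylinderCell (τ : ℝ) (y : E2) : ℤ × ℤ :=
  (⌊acrossCoord w y / τ⌋, ⌊‖w‖ * Int.fract (alongCoord w y) / τ⌋)

variable {w}

lemma EuclideanSpace.norm_sq_fin_two (y : E2) : ‖y‖ ^ 2 = y 0 ^ 2 + y 1 ^ 2 := by
  simp [EuclideanSpace.real_norm_sq_eq, Fin.sum_univ_two]

lemma norm_sq_eq_alongCoord_acrossCoord (hw : w ≠ 0) (v : E2) :
    ‖v‖ ^ 2 = (‖w‖ * alongCoord w v) ^ 2 + acrossCoord w v ^ 2 := by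
  have hw2 : w 0 ^ 2 + w 1 ^ 2 ≠ 0 := by rw [← EuclideanSpace.norm_sq_fin_two]; positivity
  rw [alongCoord, acrossCoord, mul_div_assoc', div_pow, div_pow, mul_pow,
    EuclideanSpace.norm_sq_fin_two w, EuclideanSpace.norm_sq_fin_two]
  field_simp
  ring

lemma abs_acrossCoord_le (hw : w ≠ 0) (y : E2) : |acrossCoord w y| ≤ ‖y‖ :=
  abs_le_of_sq_le_sq (by nlinarith [norm_sq_eq_alongCoord_acrossCoord hw y]) (norm_nonneg y)

lemma alongCoord_sub_sub_smul (hw : w ≠ 0) (y z : E2) (k : ℝ) :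
    alongCoord w (z - y - k • w) = alongCoord w z - alongCoord w y - k := by
  have : ‖w‖ ^ 2 ≠ 0 := by positivity
  simp only [alongCoord, PiLp.sub_apply, PiLp.smul_apply, smul_eq_mul]
  field_simp
  linear_combination k * EuclideanSpace.norm_sq_fin_two w

lemma acrossCoord_sub_sub_smul (y z : E2) (k : ℝ) :
    acrossCoord w (z - y - k • w) = acrossCoord w z - acrossCoord w y := by
  simp only [acrossCoord, PiLp.sub_apply, PiLp.smul_apply, smul_eq_mul]
  ring

lemma exists_norm_sub_sub_zsmul_lt_of_cylinderCell_eq (hw : w ≠ 0) {τ : ℝ} (hτ : 0 < τ)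
    {y z : E2} (h : cylinderCell w τ y = cylinderCell w τ z) :
    ∃ k : ℤ, ‖z - y - (k : ℝ) • w‖ < 2 * τ := by
  refine ⟨⌊alongCoord w z⌋ - ⌊alongCoord w y⌋, ?_⟩
  have hacross := abs_sub_lt_of_floor_div_eq hτ (congrArg Prod.fst h).symm
  have halong := abs_sub_lt_of_floor_div_eq hτ (congrArg Prod.snd h).symm
  rw [← mul_sub, Int.fract, Int.fract] at halong
  have hsq := norm_sq_eq_alongCoord_acrossCoord hw
    (z - y - ((⌊alongCoord w z⌋ - ⌊alongCoord w y⌋ : ℤ) : ℝ) • w)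
  rw [alongCoord_sub_sub_smul hw, acrossCoord_sub_sub_smul] at hsq
  push_cast at hsq
  have hlt : ‖z - y - ((⌊alongCoord w z⌋ - ⌊alongCoord w y⌋ : ℤ) : ℝ) • w‖ ^ 2 < (2 * τ) ^ 2 := by
    obtain ⟨h1, h2⟩ := abs_lt.mp halong
    obtain ⟨h3, h4⟩ := abs_lt.mp hacross
    push_cast
    rw [hsq]
    nlinarith
  exact lt_of_pow_lt_pow_left₀ 2 (by positivity) hlt

lemma injOn_cylinderCell (hw : w ≠ 0) {D : Set E2} {δ ε τ : ℝ}
    (hD : D.Pairwise fun a b => δ ≤ dist a b) (hτ : 0 < τ) (hτδ : 2 * τ ≤ δ) (hτε : 2 * τ ≤ ε) :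
    InjOn (cylinderCell w τ) {y ∈ D | ¬ ∃ y' ∈ D, NearMultiple ε (y' - y) w} := by
  intro y hy z hz h
  obtain ⟨k, hk⟩ := exists_norm_sub_sub_zsmul_lt_of_cylinderCell_eq hw hτ h
  rcases lt_trichotomy k 0 with hneg | rfl | hpos
  · obtain ⟨n, rfl⟩ := Int.exists_eq_neg_ofNat hneg.le
    have hflip : y - z - (n : ℝ) • w = -(z - y - ((-n : ℤ) : ℝ) • w) := by
      push_cast
      module
    refine absurd ⟨y, hy.1, n, by omega, ?_⟩ hz.2
    rw [hflip, norm_neg]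
    exact hk.trans_le hτε
  · by_contra hne
    have hδ : δ ≤ ‖z - y‖ := dist_eq_norm' y z ▸ hD hy.1 hz.1 hne
    rw [Int.cast_zero, zero_smul, sub_zero] at hk
    linarith
  · lift k to ℕ using hpos.le
    exact absurd ⟨z, hz.1, k, by omega, by exact_mod_cast hk.trans_le hτε⟩ hy.2

end Frame

theorem linearlySparse_setOf_not_nearMultiple {D : Set E2} {δ ε : ℝ} (hδ : 0 < δ) (hε : 0 < ε)
    (hD : D.Pairwise fun a b => δ ≤ dist a b) {w : E2} (hw : w ≠ 0) :
    LinearlySparse {y ∈ D | ¬ ∃ y' ∈ D, NearMultiple ε (y' - y) w} := by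
  obtain ⟨τ, hτ, hτδ, hτε⟩ : ∃ τ : ℝ, 0 < τ ∧ 2 * τ ≤ δ ∧ 2 * τ ≤ ε :=
    ⟨min δ ε / 2, by positivity, by linarith [min_le_left δ ε], by linarith [min_le_right δ ε]⟩
  set A := {y ∈ D | ¬ ∃ y' ∈ D, NearMultiple ε (y' - y) w}
  have hinj : InjOn (cylinderCell w τ) A := injOn_cylinderCell hw hD hτ hτδ hτε
  refine ⟨(2 / τ + 2) * (‖w‖ / τ + 2), fun T hT => ?_⟩
  set box := Finset.Icc ⌊-T / τ⌋ ⌊T / τ⌋ ×ˢ Finset.Icc ⌊0 / τ⌋ ⌊‖w‖ / τ⌋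
  have hmaps : MapsTo (cylinderCell w τ) (A ∩ ball 0 T) box := by
    intro y hy
    have hacross := abs_le.mp ((abs_acrossCoord_le hw y).trans (mem_ball_zero_iff.mp hy.2).le)
    refine Finset.mem_product.2
      ⟨floor_div_mem_Icc hτ hacross.1 hacross.2, floor_div_mem_Icc hτ ?_ ?_⟩
    · exact mul_nonneg (norm_nonneg w) (Int.fract_nonneg _)
    · exact mul_le_of_le_one_right (norm_nonneg w) (Int.fract_lt_one _).le
  have hinj' : InjOn (cylinderCell w τ) (A ∩ ball 0 T) := hinj.mono inter_subset_left
  refine ⟨Finite.of_injOn hmaps hinj' box.finite_toSet, ?_⟩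
  calc _ ≤ (box.card : ℝ) := by
        exact_mod_cast (ncard_le_ncard_of_injOn _ hmaps hinj' box.finite_toSet).trans
          (ncard_coe_finset box).le
    _ ≤ (2 * T / τ + 2) * (‖w‖ / τ + 2) := by
        have h1 := card_Icc_floor_div_le hτ (show -T ≤ T by linarith)
        have h2 := card_Icc_floor_div_le hτ (norm_nonneg w)
        rw [sub_neg_eq_add, ← two_mul] at h1
        rw [sub_zero] at h2
        rw [Finset.card_product, Nat.cast_mul]
        gcongr
    _ ≤ _ := by
        rw [mul_right_comm]
        gcongr
        rw [mul_div_right_comm]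
        nlinarith [show 0 ≤ 2 / τ by positivity]

theorem linearlySparse_setOf_not_nearMultiple_of_diff {Y D : Set E2} {δ ε : ℝ} (hδ : 0 < δ)
    (hε : 0 < ε) (hY : Y.Pairwise fun a b => δ ≤ dist a b) (hDY : D ⊆ Y)
    (hYD : LinearlySparse (Y \ D)) {w : E2} (hw : w ≠ 0) :
    LinearlySparse {y ∈ Y | ¬ ∃ y' ∈ D, NearMultiple ε (y' - y) w} := by
  refine (hYD.union (linearlySparse_setOf_not_nearMultiple hδ hε (hY.mono hDY) hw)).mono ?_
  rintro y ⟨hyY, hy⟩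
  by_cases hyD : y ∈ D
  · exact Or.inr ⟨hyD, hy⟩
  · exact Or.inl ⟨hyY, hyD⟩

namespace SimpleGraph

variable {V : Type*} {G : SimpleGraph V} {r : V}

lemma Connected.exists_adj_dist_eq_add_one (hG : G.Connected) {v : V} (hv : v ≠ r) :
    ∃ u, G.Adj u v ∧ G.dist r v = G.dist r u + 1 := by
  obtain ⟨p, -, hp⟩ := hG.exists_path_of_dist r v
  have hnil : ¬ p.Nil := Walk.not_nil_of_ne hv.symm
  refine ⟨p.penultimate, Walk.adj_penultimate hnil, ?_⟩
  have hle : G.dist r p.penultimate ≤ G.dist r v - 1 := by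
    simpa [Walk.length_dropLast, hp] using dist_le p.dropLast
  have hge : G.dist r v ≤ G.dist r p.penultimate + 1 := by
    simpa [dist_eq_one_iff_adj.mpr (Walk.adj_penultimate hnil)] using
      (Walk.adj_penultimate hnil).reachable.dist_triangle_right r
  have : 0 < G.dist r v := hG.pos_dist_of_ne hv.symm
  omega

lemma IsTree.eq_penultimate_of_dist_eq_add_one (hG : G.IsTree) {u v : V} {p : G.Walk r v}
    (hp : p.IsPath) (hpv : p.length = G.dist r v) (hadj : G.Adj u v)
    (hu : G.dist r v = G.dist r u + 1) : u = p.penultimate := by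
  obtain ⟨q, hq, hqu⟩ := hG.connected.exists_path_of_dist r u
  have hvq : v ∉ q.support := fun hv => by
    have := congrArg Walk.length (hG.isAcyclic.path_concat hp hq hadj.symm hv)
    rw [Walk.length_concat] at this
    omega
  exact hG.isAcyclic.eq_penultimate_of_adj_end hp hadj.symm
    (hG.isAcyclic.mem_support_of_ne_mem_support_of_adj_of_isPath hp hq hadj.symm hvq)

lemma IsTree.eq_of_adj_of_dist_eq_add_one (hG : G.IsTree) {u u' v : V} (hu : G.Adj u v)
    (hu' : G.Adj u' v) (hdu : G.dist r v = G.dist r u + 1)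
    (hdu' : G.dist r v = G.dist r u' + 1) : u = u' := by
  obtain ⟨p, hp, hpv⟩ := hG.connected.exists_path_of_dist r v
  rw [hG.eq_penultimate_of_dist_eq_add_one hp hpv hu hdu,
    hG.eq_penultimate_of_dist_eq_add_one hp hpv hu' hdu']

theorem IsTree.exists_lift {α : Type*} (hG : G.IsTree) (P : V → Set α)
    (R : V → V → α → α → Prop)
    (hstep : ∀ a b, G.Adj a b → G.dist r b = G.dist r a + 1 → ∀ y ∈ P a, ∃ y' ∈ P b, R a b y y')
    {y₀ : α} (hy₀ : y₀ ∈ P r) :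
    ∃ f : V → α, f r = y₀ ∧ (∀ v, f v ∈ P v) ∧
      ∀ a b, G.Adj a b → G.dist r b = G.dist r a + 1 → R a b (f a) (f b) := by
  classical
  choose! parent hparent using fun v (hv : v ≠ r) => hG.connected.exists_adj_dist_eq_add_one hv
  choose! next hnext using hstep
  have hlt : ∀ v, v ≠ r → G.dist r (parent v) < G.dist r v := fun v hv => by
    have := (hparent v hv).2
    omega
  let f : V → α := (measure (G.dist r)).wf.fix fun v F =>
    if hv : v = r then y₀ else next (parent v) v (F (parent v) (hlt v hv))
  have hf : ∀ v, f v = if v = r then y₀ else next (parent v) v (f (parent v)) := fun v =>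
    (WellFounded.fix_eq _ _ v).trans (dite_eq_ite ..)
  have hmem : ∀ v, f v ∈ P v := fun v => by
    induction v using (measure (G.dist r)).wf.induction with
    | h v ih =>
      rw [hf]
      split_ifs with hv
      · exact hv ▸ hy₀
      · exact (hnext _ _ (hparent v hv).1 (hparent v hv).2 _ (ih _ (hlt v hv))).1
  refine ⟨f, by simp [hf], hmem, fun a b hab hd => ?_⟩
  have hb : b ≠ r := by
    rintro rfl
    simp at hd
  have ha : a = parent b :=
    hG.eq_of_adj_of_dist_eq_add_one hab (hparent b hb).1 hd (hparent b hb).2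
  rw [hf b, if_neg hb, ← ha]
  exact (hnext a b hab hd _ (hmem a)).2

end SimpleGraph

section Liftable

variable (ε : ℝ) (Y : Set E2) {V : Finset E2} (G : SimpleGraph V) (r : V)

def liftableSet : ℕ → V → Set E2
  | 0, _ => Y
  | n + 1, v => {y ∈ Y | ∀ c, G.Adj v c → G.dist r c = G.dist r v + 1 →
      ∃ y' ∈ liftableSet n c, NearMultiple ε (y' - y) ((c : E2) - v)}

lemma liftableSet_subset (n : ℕ) (v : V) : liftableSet ε Y G r n v ⊆ Y := by
  cases n with
  | zero => exact subset_rfl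
  | succ n => exact fun y hy => hy.1

variable {ε Y}

lemma linearlySparse_diff_liftableSet {δ : ℝ} (hδ : 0 < δ) (hε : 0 < ε)
    (hY : Y.Pairwise fun a b => δ ≤ dist a b) (n : ℕ) (v : V) :
    LinearlySparse (Y \ liftableSet ε Y G r n v) := by
  induction n generalizing v with
  | zero => simpa [liftableSet] using LinearlySparse.empty
  | succ n ih =>
    refine (LinearlySparse.iUnion fun c : {c // G.Adj v c} =>
      linearlySparse_setOf_not_nearMultiple_of_diff hδ hε hY (liftableSet_subset ε Y G r n c)
        (ih c) (sub_ne_zero.2 (Subtype.val_injective.ne c.2.ne'))).mono ?_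
    rintro y ⟨hyY, hy⟩
    simp only [liftableSet, mem_ofPred_eq, not_and, not_forall] at hy
    obtain ⟨c, hc, -, hno⟩ := hy hyY
    exact mem_iUnion.2 ⟨⟨c, hc⟩, hyY, hno⟩

variable {G}

theorem SimpleGraph.IsTree.exists_nearMultiple_lift (hG : G.IsTree) {y₀ : E2}
    (hy₀ : y₀ ∈ liftableSet ε Y G r (Fintype.card V) r) :
    ∃ f : V → E2, (∀ a, f a ∈ Y) ∧ f r = y₀ ∧
      ∀ a b, G.Adj a b → NearMultiple ε (f a - f b) ((a : E2) - b) := by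
  have hdist : ∀ v, G.dist r v < Fintype.card V := fun v => by
    obtain ⟨p, hp, hpv⟩ := hG.connected.exists_path_of_dist r v
    exact hpv ▸ hp.length_lt
  obtain ⟨f, hfr, hfP, hfR⟩ := hG.exists_lift (r := r)
    (fun v => liftableSet ε Y G r (Fintype.card V - G.dist r v) v)
    (fun a b y y' => NearMultiple ε (y' - y) ((b : E2) - a))
    (fun a b hab hd y hy => by
      have hidx : Fintype.card V - G.dist r a = Fintype.card V - G.dist r b + 1 := by
        have := hdist b
        omega
      rw [hidx] at hy
      exact hy.2 b hab hd)
    (by simpa using hy₀)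
  refine ⟨f, fun a => liftableSet_subset ε Y G r _ a (hfP a), hfr, fun a b hab => ?_⟩
  rcases hG.dist_eq_dist_add_one_of_adj r hab with hd | hd
  · exact hfR b a hab.symm hd
  · simpa using (hfR a b hab hd).neg

end Liftable

theorem stmt14 (ε : ℝ) (hε : 0 < ε) (Y : Set (EuclideanSpace ℝ (Fin 2)))
    (hsep : ∃ δ > (0 : ℝ), ∀ y₁ ∈ Y, ∀ y₂ ∈ Y, y₁ ≠ y₂ → δ ≤ dist y₁ y₂)
    (hgrow : Tendsto (fun T : ℝ =>
        T / ((Y ∩ Metric.ball (0 : EuclideanSpace ℝ (Fin 2)) T).ncard : ℝ)) atTop (nhds 0))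
    (V : Finset (EuclideanSpace ℝ (Fin 2))) (G : SimpleGraph V) (hG : G.IsTree)
    (x₀ : EuclideanSpace ℝ (Fin 2)) (hx₀ : x₀ ∈ V) :
    Tendsto (fun r : ℝ =>
        (({y₀ ∈ Y | ¬ ∃ f : V → EuclideanSpace ℝ (Fin 2), (∀ a : V, f a ∈ Y) ∧
              f ⟨x₀, hx₀⟩ = y₀ ∧
              ∀ a b : V, G.Adj a b → ∃ k : ℕ, 1 ≤ k ∧
                ‖(f a - f b) - (k : ℝ) • ((a : EuclideanSpace ℝ (Fin 2)) - (b : EuclideanSpace ℝ (Fin 2)))‖ < ε} ∩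
            Metric.ball (0 : EuclideanSpace ℝ (Fin 2)) r).ncard : ℝ) /
          ((Y ∩ Metric.ball (0 : EuclideanSpace ℝ (Fin 2)) r).ncard : ℝ))
      atTop (nhds 0) := by
  obtain ⟨δ, hδ, hY⟩ := hsep
  have hsparse := linearlySparse_diff_liftableSet G ⟨x₀, hx₀⟩ hδ hε hY (Fintype.card V) ⟨x₀, hx₀⟩
  refine (hsparse.mono ?_).tendsto_ncard_div hgrow
  rintro y₀ ⟨hy₀Y, hno⟩
  exact ⟨hy₀Y, fun hy₀ => hno (hG.exists_nearMultiple_lift ⟨x₀, hx₀⟩ hy₀)⟩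
end

section
/- Let T > μ > 0 and let a₁ = (5T, y₁), a₂ = (5T, y₂) with y₁ ≤ y₂, y₁, y₂ ∈ [−μ/2, μ/2], and a₃ = (x₃, y₃), a₄ = (x₃, y₄) ∈ [−T,T]² with y₄ − y₃ ≥ μ. Let ℓ₁ be the segment from a₁ to b and ℓ₂ the segment from a₂ to c where {b,c} = {a₃,a₄}, b ≠ c. Let d₁, d₂ be the points where ℓ₁, ℓ₂ respectively meet the vertical line x = T (the right side of the square [−T,T]²). Then ‖d₁ − d₂‖ ≥ μ/3. -/
/-! Both segments start at abscissa `5T` and end at the common abscissa `x₃ ∈ [-T, T]`, so they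
cross the line `x = T` at the same parameter `v = 4T / (5T - x₃) ∈ [2/3, 1]`. The vertical gap
there is `(1 - v) (y₁ - y₂) + v (b_y - c_y)`; since `|y₁ - y₂| ≤ μ ≤ |b_y - c_y|`, it is at least
`v μ - (1 - v) μ = (2v - 1) μ ≥ μ / 3`. -/

open Metric Set Real

theorem EuclideanSpace.exists_apply_eq_of_mem_segment {ι : Type*} {a b d : EuclideanSpace ℝ ι}
    (h : d ∈ segment ℝ a b) : ∃ v ∈ Icc (0 : ℝ) 1, ∀ i, d i = a i + v * (b i - a i) := by
  obtain ⟨v, hv, rfl⟩ := (segment_eq_image_lineMap ℝ a b).subst (motive := (d ∈ ·)) h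
  refine ⟨v, hv, fun i => ?_⟩
  simp [AffineMap.lineMap_apply]
  ring

theorem le_abs_convex_combination {α β v : ℝ} (hv₀ : 0 ≤ v) (hv₁ : v ≤ 1) :
    v * |β| - (1 - v) * |α| ≤ |(1 - v) * α + v * β| := by
  calc v * |β| - (1 - v) * |α| = |v * β| - |(1 - v) * α| := by
        rw [abs_mul, abs_mul, abs_of_nonneg hv₀, abs_of_nonneg (sub_nonneg.2 hv₁)]
    _ ≤ |(1 - v) * α + v * β| := add_comm (v * β) _ ▸ abs_sub_abs_le_abs_add _ _

/-- The parameter at which the segment from abscissa `5T` to abscissa `x` reaches abscissa `T`. -/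
theorem eq_crossing_param {T x v : ℝ} (hT : 0 < T) (hx : |x| ≤ T)
    (h : T = 5 * T + v * (x - 5 * T)) : v = 4 * T / (5 * T - x) ∧ 2 / 3 ≤ v := by
  have hx' := abs_le.1 hx
  have hpos : 0 < 5 * T - x := by linarith
  have hv : v = 4 * T / (5 * T - x) := by rw [eq_div_iff hpos.ne']; linarith
  refine ⟨hv, ?_⟩
  rw [hv, le_div_iff₀ hpos]
  linarith

theorem stmt16_general (T μ : ℝ) (hμ : 0 < μ) (hT : μ < T)
    (a₁ a₂ a₃ a₄ b c : EuclideanSpace ℝ (Fin 2))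
    (ha₁0 : a₁ 0 = 5 * T) (ha₂0 : a₂ 0 = 5 * T)
    (h1I : a₁ 1 ∈ Set.Icc (-(μ / 2)) (μ / 2)) (h2I : a₂ 1 ∈ Set.Icc (-(μ / 2)) (μ / 2))
    (h34 : a₃ 0 = a₄ 0) (h34y : μ ≤ a₄ 1 - a₃ 1)
    (ha₃B : |a₃ 0| ≤ T ∧ |a₃ 1| ≤ T)
    (hbc : (b = a₃ ∧ c = a₄) ∨ (b = a₄ ∧ c = a₃))
    (d₁ d₂ : EuclideanSpace ℝ (Fin 2))
    (hd₁ : d₁ ∈ segment ℝ a₁ b) (hd₁0 : d₁ 0 = T)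
    (hd₂ : d₂ ∈ segment ℝ a₂ c) (hd₂0 : d₂ 0 = T) :
    μ / 3 ≤ dist d₁ d₂ := by
  have hT₀ : 0 < T := hμ.trans hT
  obtain ⟨v₁, ⟨hv₁₀, hv₁₁⟩, hd₁i⟩ := EuclideanSpace.exists_apply_eq_of_mem_segment hd₁
  obtain ⟨v₂, -, hd₂i⟩ := EuclideanSpace.exists_apply_eq_of_mem_segment hd₂
  have hb₀ : b 0 = a₃ 0 := by rcases hbc with ⟨rfl, -⟩ | ⟨rfl, -⟩ <;> simp [h34]
  have hc₀ : c 0 = a₃ 0 := by rcases hbc with ⟨-, rfl⟩ | ⟨-, rfl⟩ <;> simp [h34]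
  obtain ⟨hv₁, hv₁_ge⟩ := eq_crossing_param (v := v₁) hT₀ ha₃B.1
    (by simpa only [hd₁0, ha₁0, hb₀] using hd₁i 0)
  obtain ⟨hv₂, -⟩ := eq_crossing_param (v := v₂) hT₀ ha₃B.1
    (by simpa only [hd₂0, ha₂0, hc₀] using hd₂i 0)
  have hbc₁ : μ ≤ |b 1 - c 1| := by
    rcases hbc with ⟨rfl, rfl⟩ | ⟨rfl, rfl⟩
    · exact h34y.trans ((le_abs_self _).trans (abs_sub_comm _ _).le)
    · exact h34y.trans (le_abs_self _)
  have ha₁₂ : |a₁ 1 - a₂ 1| ≤ μ := 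
    abs_sub_le_iff.2 ⟨by linarith [h1I.2, h2I.1], by linarith [h1I.1, h2I.2]⟩
  have hgap : d₁ 1 - d₂ 1 = (1 - v₁) * (a₁ 1 - a₂ 1) + v₁ * (b 1 - c 1) := by
    rw [hd₁i, hd₂i, hv₂, ← hv₁]; ring
  calc μ / 3 ≤ v₁ * μ - (1 - v₁) * μ := by nlinarith
    _ ≤ v₁ * |b 1 - c 1| - (1 - v₁) * |a₁ 1 - a₂ 1| := by gcongr
    _ ≤ |d₁ 1 - d₂ 1| := hgap ▸ le_abs_convex_combination hv₁₀ hv₁₁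
    _ ≤ dist d₁ d₂ := PiLp.dist_apply_le d₁ d₂ 1

theorem stmt16 (T μ : ℝ) (hμ : 0 < μ) (hT : μ < T)
    (a₁ a₂ a₃ a₄ b c : EuclideanSpace ℝ (Fin 2))
    (ha₁0 : a₁ 0 = 5 * T) (ha₂0 : a₂ 0 = 5 * T)
    (h12 : a₁ 1 ≤ a₂ 1)
    (h1I : a₁ 1 ∈ Set.Icc (-(μ / 2)) (μ / 2)) (h2I : a₂ 1 ∈ Set.Icc (-(μ / 2)) (μ / 2))
    (h34 : a₃ 0 = a₄ 0) (h34y : μ ≤ a₄ 1 - a₃ 1)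
    (ha₃B : |a₃ 0| ≤ T ∧ |a₃ 1| ≤ T) (ha₄B : |a₄ 0| ≤ T ∧ |a₄ 1| ≤ T)
    (hbc : (b = a₃ ∧ c = a₄) ∨ (b = a₄ ∧ c = a₃))
    (d₁ d₂ : EuclideanSpace ℝ (Fin 2))
    (hd₁ : d₁ ∈ segment ℝ a₁ b) (hd₁0 : d₁ 0 = T)
    (hd₂ : d₂ ∈ segment ℝ a₂ c) (hd₂0 : d₂ 0 = T) :
    μ / 3 ≤ dist d₁ d₂ :=
  stmt16_general T μ hμ hT a₁ a₂ a₃ a₄ b c ha₁0 ha₂0 h1I h2I h34 h34y ha₃B hbc d₁ d₂ hd₁ hd₁0 hd₂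
    hd₂0
end

section
/- Let ε > δ > 0 with δ < 1, and let L be a ray emanating from a point p on the circle ∂B(z,ε) whose angle with the tangent line to the circle at p is at least δ (i.e., L is not nearly tangent) and which enters B(z,ε). Then the line containing L meets B(z,ε) at some point a with dist(a, ∂B(z,ε)) > εδ²/4. -/
/-!
Let `c = ⟪v, z - p⟫`. The angle condition gives `c ≥ ε sin δ`, and the foot `a = p + c v` of the
perpendicular from `z` to the line satisfies `|a - z|² = ε² - c²`. Hence
`dist(a, ∂B) ≥ ε - |a - z| ≥ c² / (2ε) ≥ ε sin² δ / 2` (the middle step is `(ε - |a - z|)² ≥ 0`),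
and `sin δ > 3δ/4` for `δ < 1`.
-/

open Metric Real

open InnerProductGeometry in
theorem norm_mul_sin_le_inner_of_angle_le {V : Type*} [NormedAddCommGroup V]
    [InnerProductSpace ℝ V] {v w : V} {δ : ℝ} (hv : ‖v‖ = 1) (hδ : 0 ≤ δ)
    (hangle : angle v w ≤ π / 2 - δ) : ‖w‖ * sin δ ≤ inner ℝ v w := by
  have hcos : sin δ ≤ cos (angle v w) := by
    rw [← cos_pi_div_two_sub]
    exact cos_le_cos_of_nonneg_of_le_pi (angle_nonneg v w) (by linarith [pi_pos]) hangle
  rw [← cos_angle_mul_norm_mul_norm, hv, one_mul, mul_comm]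
  exact mul_le_mul_of_nonneg_right hcos (norm_nonneg w)

theorem dist_add_inner_smul_sq {V : Type*} [NormedAddCommGroup V] [InnerProductSpace ℝ V]
    {v : V} (hv : ‖v‖ = 1) (p z : V) :
    dist (p + inner ℝ v (z - p) • v) z ^ 2 = dist p z ^ 2 - inner ℝ v (z - p) ^ 2 := by
  set c := inner ℝ v (z - p)
  have hpz : p + c • v - z = c • v - (z - p) := by abel
  rw [dist_eq_norm, dist_eq_norm', hpz, ← real_inner_self_eq_norm_sq,
    ← real_inner_self_eq_norm_sq, inner_sub_sub_self]
  simp only [real_inner_smul_left, real_inner_smul_right, real_inner_comm v (z - p),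
    real_inner_self_eq_norm_sq v, hv]
  ring

theorem sub_dist_le_infDist_sphere {E : Type*} [NormedAddCommGroup E] [NormedSpace ℝ E]
    [Nontrivial E] {z : E} {ε : ℝ} (hε : 0 ≤ ε) (x : E) :
    ε - dist x z ≤ infDist x (sphere z ε) := by
  refine (le_infDist (NormedSpace.sphere_nonempty.mpr hε)).mpr fun y hy => ?_
  rw [mem_sphere] at hy
  linarith [dist_triangle_left y z x]

theorem sq_div_two_mul_le_sub_of_sq_eq_sub_sq {ε c d : ℝ} (hε : 0 < ε)
    (h : d ^ 2 = ε ^ 2 - c ^ 2) : c ^ 2 / (2 * ε) ≤ ε - d := by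
  rw [div_le_iff₀ (by positivity)]
  nlinarith

theorem sq_lt_two_mul_sin_sq {δ : ℝ} (hδ : 0 < δ) (hδ1 : δ ≤ 1) : δ ^ 2 < 2 * sin δ ^ 2 := by
  have hcube : δ ^ 3 ≤ δ := by nlinarith [pow_le_one₀ hδ.le hδ1 (n := 2)]
  have hsin : 3 * δ / 4 < sin δ := by linarith [sin_gt_sub_cube hδ]
  nlinarith

theorem stmt17 (ε δ : ℝ) (hδ : 0 < δ) (hδε : δ < ε) (hδ1 : δ < 1)
    (z p v : EuclideanSpace ℝ (Fin 2)) (hp : p ∈ sphere z ε) (hv : ‖v‖ = 1)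
    (hangle : InnerProductGeometry.angle v (z - p) ≤ π / 2 - δ) :
    ∃ t : ℝ, 0 ≤ t ∧ (p + t • v) ∈ Metric.ball z ε ∧
      ε * δ ^ 2 / 4 < Metric.infDist (p + t • v) (sphere z ε) := by
  have hε : 0 < ε := hδ.trans hδε
  have hzp : ‖z - p‖ = ε := by rw [← dist_eq_norm', ← mem_sphere.mp hp]
  set c := inner ℝ v (z - p)
  set d := dist (p + c • v) z
  have hc : ε * sin δ ≤ c := hzp ▸ norm_mul_sin_le_inner_of_angle_le hv hδ.le hangle
  have hsin0 : 0 < sin δ := sin_pos_of_pos_of_lt_pi hδ (by linarith [pi_gt_three])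
  have hc0 : 0 < c := (mul_pos hε hsin0).trans_le hc
  have hd : d ^ 2 = ε ^ 2 - c ^ 2 := by rw [dist_add_inner_smul_sq hv, mem_sphere.mp hp]
  have hdε : d < ε := by nlinarith [dist_nonneg (x := p + c • v) (y := z)]
  refine ⟨c, hc0.le, mem_ball.mpr hdε, ?_⟩
  have hsin := sq_lt_two_mul_sin_sq hδ hδ1.le
  calc ε * δ ^ 2 / 4 < (ε * sin δ) ^ 2 / (2 * ε) := by
        rw [lt_div_iff₀ (by positivity)]; nlinarith [mul_lt_mul_of_pos_left hsin (mul_pos hε hε)]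
    _ ≤ c ^ 2 / (2 * ε) := by gcongr
    _ ≤ ε - d := sq_div_two_mul_le_sub_of_sq_eq_sub_sq hε hd
    _ ≤ _ := sub_dist_le_infDist_sphere hε.le _
end

section
/- Let k ≥ 2 be an integer, c, η > 0, and let I be a real interval of length |I|. Let A ⊆ I be a finite set with #A ≥ c|I| whose points are pairwise at distance at least η. Set r = k/(k−1), j = ⌈log(2/(cη))/log r⌉, and Z₀ = 2ηk^j. If |I| ≥ Z₀, then there exists x ≥ 2η and a subinterval J ⊆ I of length kx such that when J is divided into k consecutive equal subintervals J₁,…,J_k, each J_i contains a point of A. -/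
/-!
If no block of `k` consecutive parts of length `x ≥ 2η` inside `[a, b]` has all its parts meeting
`A`, cut an interval of length at least `2ηk` into `k` equal parts: one part misses `A`, so the
parts to its left or those to its right carry a density of `A` at least `k / (k - 1)` times the
original one, on an interval at least `1 / k` as long. After `j` steps starting from `[a, b]`
this gives an interval of length `L ≥ 2η` with density at least `c (k / (k - 1)) ^ j ≥ 2 / η`,
whereas an `η`-separated set has at most `L / η + 1 < 2L / η` points there.
-/

open Set Real

lemma le_pow_natCeil_log_div_log {r y : ℝ} (hr : 1 < r) (hy : 0 < y) :
    y ≤ r ^ ⌈log y / log r⌉₊ :=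
  calc y = r ^ logb r y := (rpow_logb (by linarith) hr.ne' hy).symm
    _ ≤ r ^ (⌈logb r y⌉₊ : ℝ) := rpow_le_rpow_of_exponent_le hr.le (Nat.le_ceil _)
    _ = r ^ ⌈log y / log r⌉₊ := rpow_natCast _ _

lemma ncard_le_div_add_one_of_pairwise {S : Set ℝ} {η u v : ℝ} (hη : 0 < η) (huv : u ≤ v)
    (hS : S ⊆ Icc u v) (hsep : S.Pairwise fun p q => η ≤ |p - q|) :
    (S.ncard : ℝ) ≤ (v - u) / η + 1 := by
  -- points pairwise `η` apart lie in distinct cells `⌊(p - u) / η⌋₊`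
  have hnonneg : ∀ p ∈ S, 0 ≤ (p - u) / η := fun p hp =>
    div_nonneg (sub_nonneg.mpr (hS hp).1) hη.le
  have hinj : InjOn (fun p => ⌊(p - u) / η⌋₊) S := by
    intro p hp q hq hpq
    by_contra hne
    have h := Int.abs_sub_lt_one_of_floor_eq_floor (a := (p - u) / η) (b := (q - u) / η)
      (by rw [← Int.natCast_floor_eq_floor (hnonneg p hp), ← Int.natCast_floor_eq_floor
        (hnonneg q hq)]; exact_mod_cast hpq)
    rw [← sub_div, sub_sub_sub_cancel_right, abs_div, abs_of_pos hη, div_lt_one hη] at h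
    exact (hsep hp hq hne).not_gt h
  have hmaps : ∀ p ∈ S, ⌊(p - u) / η⌋₊ ∈ (Finset.range (⌊(v - u) / η⌋₊ + 1) : Set ℕ) := by
    intro p hp
    simp only [Finset.coe_range, mem_Iio, Nat.lt_succ_iff]
    exact Nat.floor_le_floor (by gcongr; exact (hS hp).2)
  have hcard := ncard_le_ncard_of_injOn _ hmaps hinj (Finset.finite_toSet _)
  rw [ncard_coe_finset, Finset.card_range] at hcard
  calc (S.ncard : ℝ) ≤ (⌊(v - u) / η⌋₊ + 1 : ℕ) := by exact_mod_cast hcard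
    _ ≤ (v - u) / η + 1 := by
      push_cast
      gcongr
      exact Nat.floor_le (div_nonneg (sub_nonneg.mpr huv) hη.le)

lemma ncard_inter_Icc_lt_of_pairwise {A : Set ℝ} {η u L : ℝ} (hη : 0 < η) (hL : 2 * η ≤ L)
    (hsep : A.Pairwise fun p q => η ≤ |p - q|) :
    ((A ∩ Icc u (u + L)).ncard : ℝ) < 2 / η * L := by
  have h := ncard_le_div_add_one_of_pairwise (u := u) (v := u + L) hη (by linarith)
    inter_subset_right (hsep.mono inter_subset_left)
  have h1 : 1 ≤ L / (2 * η) := by rwa [le_div_iff₀ (by positivity), one_mul]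
  have hL' : 0 < L / η := by apply div_pos <;> linarith
  calc ((A ∩ Icc u (u + L)).ncard : ℝ) ≤ L / η + L / (2 * η) := by
        rw [add_sub_cancel_left] at h; linarith
    _ < 2 / η * L := by
      field_simp
      linarith

lemma exists_dense_part_of_le_add {n n₁ n₂ l₁ l₂ : ℕ} (h : n ≤ n₁ + n₂) (hl : 0 < l₁ + l₂)
    (h₁ : l₁ = 0 → n₁ = 0) (h₂ : l₂ = 0 → n₂ = 0) :
    (0 < l₁ ∧ n * l₁ ≤ (l₁ + l₂) * n₁) ∨ (0 < l₂ ∧ n * l₂ ≤ (l₁ + l₂) * n₂) := by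
  rcases Nat.eq_zero_or_pos l₁ with rfl | hl₁ <;> rcases Nat.eq_zero_or_pos l₂ with rfl | hl₂
  · omega
  · right; simp_all [mul_comm]
  · left; simp_all [mul_comm]
  · by_contra! H
    nlinarith [H.1 hl₁, H.2 hl₂]

lemma inter_Icc_subset_union_of_disjoint {A : Set ℝ} {u v w z : ℝ} (h : Disjoint A (Icc v w)) :
    A ∩ Icc u z ⊆ A ∩ Icc u v ∪ A ∩ Icc w z := by
  rintro p ⟨hpA, hup, hpz⟩
  by_cases hpv : p ≤ v
  · exact Or.inl ⟨hpA, hup, hpv⟩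
  · refine Or.inr ⟨hpA, ?_, hpz⟩
    by_contra! hpw
    exact disjoint_left.mp h hpA ⟨(not_le.mp hpv).le, hpw.le⟩

/-- The chosen `l` parts carry a density of `A` at least `k / (k - 1)` times that of the
whole block `[u, u + k x]`. -/
lemma exists_block_count_increment {A : Set ℝ} {k i : ℕ} (hk : 2 ≤ k) (hi : i < k) {u x : ℝ}
    (hx : 0 ≤ x) (hempty : Disjoint A (Icc (u + i * x) (u + (i + 1) * x))) :
    ∃ u' : ℝ, ∃ l : ℕ, 0 < l ∧ Icc u' (u' + l * x) ⊆ Icc u (u + k * x) ∧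
      (A ∩ Icc u (u + k * x)).ncard * l ≤ (k - 1) * (A ∩ Icc u' (u' + l * x)).ncard := by
  have hright : u + (i + 1) * x + ((k - 1 - i : ℕ) : ℝ) * x = u + k * x := by
    push_cast [Nat.cast_sub (by omega : i ≤ k - 1), Nat.cast_sub (by omega : 1 ≤ k)]
    ring
  have hleft_sub : Icc u (u + i * x) ⊆ Icc u (u + k * x) :=
    Icc_subset_Icc_right (by gcongr)
  have hright_sub : Icc (u + (i + 1) * x) (u + k * x) ⊆ Icc u (u + k * x) :=
    Icc_subset_Icc_left (by nlinarith)
  have hsplit : A ∩ Icc u (u + k * x) =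
      A ∩ Icc u (u + i * x) ∪ A ∩ Icc (u + (i + 1) * x) (u + k * x) :=
    (inter_Icc_subset_union_of_disjoint hempty).antisymm
      (union_subset (inter_subset_inter_right A hleft_sub) (inter_subset_inter_right A hright_sub))
  have hl : i + (k - 1 - i) = k - 1 := by omega
  have hleft_empty : i = 0 → (A ∩ Icc u (u + i * x)).ncard = 0 := by
    rintro rfl
    rw [disjoint_iff_inter_eq_empty.mp (hempty.mono_right
      (Icc_subset_Icc (by simp) (by simpa using hx))), ncard_empty]
  have hright_empty : k - 1 - i = 0 → (A ∩ Icc (u + (i + 1) * x) (u + k * x)).ncard = 0 := by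
    intro h
    have hki : (k : ℝ) ≤ i + 1 := by exact_mod_cast (by omega : k ≤ i + 1)
    rw [disjoint_iff_inter_eq_empty.mp (hempty.mono_right
      (Icc_subset_Icc (by nlinarith) (by nlinarith))), ncard_empty]
  rcases exists_dense_part_of_le_add (hsplit ▸ ncard_union_le _ _) (by omega) hleft_empty
    hright_empty with ⟨hpos, hcount⟩ | ⟨hpos, hcount⟩
  · exact ⟨u, i, hpos, hleft_sub, hl ▸ hcount⟩
  · refine ⟨u + (i + 1) * x, k - 1 - i, hpos, by rwa [hright], ?_⟩
    rw [hright]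
    rwa [hl] at hcount

lemma exists_dense_subinterval_of_forall_exists_disjoint {A : Set ℝ} {k : ℕ} (hk : 2 ≤ k)
    {η a b : ℝ} (hη : 0 ≤ η)
    (hno : ∀ x, 2 * η ≤ x → ∀ u, Icc u (u + k * x) ⊆ Icc a b →
      ∃ i < k, Disjoint A (Icc (u + i * x) (u + (i + 1) * x)))
    (s : ℕ) {d u L : ℝ} (hsub : Icc u (u + L) ⊆ Icc a b) (hL : 2 * η * k ^ s ≤ L)
    (hd : d * L ≤ (A ∩ Icc u (u + L)).ncard) :
    ∃ u' L', Icc u' (u' + L') ⊆ Icc a b ∧ 2 * η ≤ L' ∧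
      d * (k / (k - 1)) ^ s * L' ≤ (A ∩ Icc u' (u' + L')).ncard := by
  have hk1 : (1 : ℝ) < k := by exact_mod_cast hk
  induction s generalizing d u L with
  | zero => exact ⟨u, L, hsub, by simpa using hL, by simpa using hd⟩
  | succ s ih =>
    set x := L / k with hx_def
    have hLx : u + k * x = u + L := by rw [hx_def]; field_simp
    have hx : 2 * η * k ^ s ≤ x := by
      rwa [hx_def, le_div_iff₀ (by linarith), mul_assoc, ← pow_succ]
    have hx2 : 2 * η ≤ x := (le_mul_of_one_le_right (by positivity) (one_le_pow₀ hk1.le)).trans hx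
    obtain ⟨i, hi, hempty⟩ := hno x hx2 u (hLx ▸ hsub)
    obtain ⟨u', l, hl, hsub', hcount⟩ :=
      exists_block_count_increment hk hi (by linarith) hempty
    rw [hLx] at hsub' hcount
    have hl1 : (1 : ℝ) ≤ l := by exact_mod_cast hl
    have hcount' : ((A ∩ Icc u (u + L)).ncard : ℝ) * l ≤
        (k - 1) * (A ∩ Icc u' (u' + l * x)).ncard := by
      rw [← Nat.cast_pred (by omega)]
      exact_mod_cast hcount
    have hdense : d * (k / (k - 1)) * (l * x) ≤ (A ∩ Icc u' (u' + l * x)).ncard :=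
      calc d * (k / (k - 1)) * (l * x) = d * L * l / (k - 1) := by
            rw [hx_def]; field_simp
        _ ≤ (A ∩ Icc u (u + L)).ncard * l / (k - 1) := by gcongr
        _ ≤ (A ∩ Icc u' (u' + l * x)).ncard := by rw [div_le_iff₀ (by linarith)]; linarith
    obtain ⟨u'', L'', hsub'', hL'', hdense''⟩ := ih (hsub'.trans hsub)
      (hx.trans (le_mul_of_one_le_left (by linarith) hl1)) hdense
    exact ⟨u'', L'', hsub'', hL'', by rwa [pow_succ', ← mul_assoc]⟩

theorem stmt18_general (k : ℕ) (hk : 2 ≤ k) (c η : ℝ) (hc : 0 < c) (hη : 0 < η)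
    (a b : ℝ) (A : Set ℝ) (hA : A ⊆ Set.Icc a b)
    (hcard : c * (b - a) ≤ (A.ncard : ℝ))
    (hsepA : ∀ p ∈ A, ∀ q ∈ A, p ≠ q → η ≤ |p - q|)
    (hlen : 2 * η * (k : ℝ) ^
        (⌈Real.log (2 / (c * η)) / Real.log ((k : ℝ) / ((k : ℝ) - 1))⌉₊) ≤ b - a) :
    ∃ x : ℝ, 2 * η ≤ x ∧ ∃ u : ℝ,
      Set.Icc u (u + (k : ℝ) * x) ⊆ Set.Icc a b ∧
      ∀ i : ℕ, i < k → ∃ p ∈ A, p ∈ Set.Icc (u + (i : ℝ) * x) (u + ((i : ℝ) + 1) * x) := by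
  by_contra! hno
  set r : ℝ := k / (k - 1)
  set j := ⌈log (2 / (c * η)) / log r⌉₊
  have hr : 1 < r := by
    have hk' : (2 : ℝ) ≤ k := by exact_mod_cast hk
    rw [one_lt_div (by linarith)]
    linarith
  obtain ⟨u, L, -, hL, hdense⟩ := exists_dense_subinterval_of_forall_exists_disjoint hk hη.le
    (fun x hx u hsub => (hno x hx u hsub).imp fun _ ⟨hi, h⟩ => ⟨hi, disjoint_left.mpr h⟩)
    _ (by rw [add_sub_cancel]) hlen (by rwa [add_sub_cancel, inter_eq_left.mpr hA])
  have hrj := le_pow_natCeil_log_div_log hr (show 0 < 2 / (c * η) by positivity)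
  have hcrj : 2 / η ≤ c * r ^ j :=
    calc 2 / η = c * (2 / (c * η)) := by field_simp
      _ ≤ c * r ^ j := by gcongr
  have hsparse := ncard_inter_Icc_lt_of_pairwise (u := u) hη hL hsepA
  linarith [mul_le_mul_of_nonneg_right hcrj (by linarith : 0 ≤ L)]

theorem stmt18 (k : ℕ) (hk : 2 ≤ k) (c η : ℝ) (hc : 0 < c) (hη : 0 < η)
    (a b : ℝ) (hab : a ≤ b) (A : Set ℝ) (hA : A ⊆ Set.Icc a b) (hAfin : A.Finite)
    (hcard : c * (b - a) ≤ (A.ncard : ℝ))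
    (hsepA : ∀ p ∈ A, ∀ q ∈ A, p ≠ q → η ≤ |p - q|)
    (hlen : 2 * η * (k : ℝ) ^
        (⌈Real.log (2 / (c * η)) / Real.log ((k : ℝ) / ((k : ℝ) - 1))⌉₊) ≤ b - a) :
    ∃ x : ℝ, 2 * η ≤ x ∧ ∃ u : ℝ,
      Set.Icc u (u + (k : ℝ) * x) ⊆ Set.Icc a b ∧
      ∀ i : ℕ, i < k → ∃ p ∈ A, p ∈ Set.Icc (u + (i : ℝ) * x) (u + ((i : ℝ) + 1) * x) :=
  stmt18_general k hk c η hc hη a b A hA hcard hsepA hlen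
end

section
/- For every ε > 0 and every x ∈ ℝ², there is a relatively dense set Y ⊆ ℝ² and infinitely many directions v ∈ S¹ such that dist(L_{x,v}, Y \ {x}) ≥ ε for each such v. -/
open Metric Set MeasureTheory Filter Real

/-!
Take the rays from `x` with slopes `2⁻ⁿ` and let `Y` be the set of points at distance at least `ε`
from all of them. Right of `x`, a vertical line at horizontal distance `a` meets these rays at the
heights `a 2⁻ⁿ`, a lacunary sequence, so every window of height `O(ε)` on that line contains a point
`2ε` away from all of them; left of `x` the rays are far anyway. Hence `Y` is relatively dense.
-/

open RealInnerProductSpace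

lemma le_setDist {E : Type*} [PseudoMetricSpace E] {A B : Set E} {ε : ℝ} (hA : A.Nonempty)
    (hB : B.Nonempty) (h : ∀ a ∈ A, ∀ b ∈ B, ε ≤ dist a b) : ε ≤ setDist A B :=
  le_csInf (hA.image2 hB) (by rintro _ ⟨a, ha, b, hb, rfl⟩; exact h a ha b hb)

section Ray

variable {E : Type*} [NormedAddCommGroup E] [NormedSpace ℝ E]

lemma self_mem_ray (x v : E) : x ∈ ray x v :=
  ⟨0, le_rfl, by simp⟩

lemma ray_smul_subset {c : ℝ} (hc : 0 ≤ c) (x v : E) : ray x (c • v) ⊆ ray x v := by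
  rintro _ ⟨t, ht, rfl⟩
  exact ⟨t * c, mul_nonneg ht hc, by rw [mul_smul]⟩

end Ray

section InnerProduct

variable {E : Type*} [NormedAddCommGroup E] [InnerProductSpace ℝ E]

lemma inner_sub_le_norm_mul_dist_of_mem_ray {u v x r : E} (huv : ⟪u, v⟫ ≤ 0)
    (hr : r ∈ ray x v) (q : E) : ⟪u, q - x⟫ ≤ ‖u‖ * dist r q := by
  obtain ⟨t, ht, rfl⟩ := hr
  have hsplit : ⟪u, q - x⟫ = ⟪u, q - (x + t • v)⟫ + t * ⟪u, v⟫ := by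
    rw [show q - x = q - (x + t • v) + t • v by abel, inner_add_right, real_inner_smul_right]
  calc ⟪u, q - x⟫ ≤ ⟪u, q - (x + t • v)⟫ := by rw [hsplit]; linarith [mul_nonpos_of_nonneg_of_nonpos ht huv]
    _ ≤ ‖u‖ * ‖q - (x + t • v)‖ := real_inner_le_norm _ _
    _ = ‖u‖ * dist (x + t • v) q := by rw [dist_comm, dist_eq_norm]

lemma abs_inner_sub_le_norm_mul_dist_of_mem_ray {u v x r : E} (huv : ⟪u, v⟫ = 0)
    (hr : r ∈ ray x v) (q : E) : |⟪u, q - x⟫| ≤ ‖u‖ * dist r q := by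
  have hneg := inner_sub_le_norm_mul_dist_of_mem_ray (u := -u) (by simp [huv]) hr q
  rw [inner_neg_left, norm_neg] at hneg
  exact abs_le.2 ⟨by linarith, inner_sub_le_norm_mul_dist_of_mem_ray huv.le hr q⟩

end InnerProduct

lemma exists_abs_sub_le_forall_le_abs_sub {ι : Type*} {f : ι → ℝ} (hpos : ∀ i, 0 < f i)
    (hlac : ∀ i j, f i < f j → 2 * f i ≤ f j) {δ : ℝ} (hδ : 0 ≤ δ) (y₀ : ℝ) :
    ∃ y, |y - y₀| ≤ 4 * δ ∧ ∀ i, δ ≤ |y - f i| := by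
  by_cases hlow : y₀ < 3 * δ
  · refine ⟨min y₀ (-δ), abs_le.2 ⟨?_, ?_⟩, fun i => ?_⟩
    · rcases min_cases y₀ (-δ) with h | h <;> linarith
    · linarith [min_le_left y₀ (-δ)]
    · rw [abs_sub_comm]
      exact le_abs.2 (Or.inl (by linarith [min_le_right y₀ (-δ), hpos i]))
  by_cases hnear : ∃ i, |f i - y₀| < δ
  · obtain ⟨i, hi⟩ := hnear
    obtain ⟨hi₁, hi₂⟩ := abs_lt.1 hi
    refine ⟨f i + δ, abs_le.2 ⟨by linarith, by linarith⟩, fun j => ?_⟩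
    rcases lt_trichotomy (f j) (f i) with hji | hji | hij
    · have := hlac j i hji
      exact le_abs.2 (Or.inl (by linarith [hpos j]))
    · simp [hji, abs_of_nonneg hδ]
    · have := hlac i j hij
      exact le_abs.2 (Or.inr (by linarith))
  · push Not at hnear
    exact ⟨y₀, by simp; positivity, fun i => by rw [abs_sub_comm]; exact hnear i⟩

noncomputable def lacunaryDir (n : ℕ) : EuclideanSpace ℝ (Fin 2) := !₂[1, (2 ^ n)⁻¹]

lemma lacunaryDir_ne_zero (n : ℕ) : lacunaryDir n ≠ 0 := fun h => by
  simpa [lacunaryDir] using congrArg (· 0) h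

lemma mul_inv_two_pow_lacunary {a : ℝ} (ha : 0 < a) (i j : ℕ)
    (h : a * (2 ^ i)⁻¹ < a * (2 ^ j)⁻¹) : 2 * (a * (2 ^ i)⁻¹) ≤ a * (2 ^ j)⁻¹ := by
  have hji : j + 1 ≤ i := by
    by_contra! hij
    have hij : i ≤ j := by omega
    exact h.not_ge (by gcongr; norm_num)
  have hpow : 2 * (2 ^ i : ℝ)⁻¹ ≤ (2 ^ j)⁻¹ :=
    calc 2 * (2 ^ i : ℝ)⁻¹ ≤ 2 * (2 ^ (j + 1))⁻¹ := by gcongr; norm_num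
      _ = (2 ^ j)⁻¹ := by rw [pow_succ]; field_simp
  calc 2 * (a * (2 ^ i)⁻¹) = a * (2 * (2 ^ i)⁻¹) := by ring
    _ ≤ a * (2 ^ j)⁻¹ := by gcongr

section LacunaryRays

variable {ε : ℝ} {x p : EuclideanSpace ℝ (Fin 2)}

lemma exists_near_far_from_rays_of_le (hε : 0 < ε) (hleft : p 0 ≤ x 0) :
    ∃ q, dist p q < 10 * ε ∧ ∀ n, ∀ r ∈ ray x (lacunaryDir n), ε ≤ dist r q := by
  refine ⟨p - !₂[ε, 0], ?_, fun n r hr => ?_⟩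
  · simp [EuclideanSpace.norm_eq, Real.sqrt_sq hε.le]
    linarith
  set u : EuclideanSpace ℝ (Fin 2) := !₂[-1, 0]
  have hsep := inner_sub_le_norm_mul_dist_of_mem_ray (u := u)
    (by simp [u, lacunaryDir, PiLp.inner_apply, Fin.sum_univ_two]) hr (p - !₂[ε, 0])
  have hinner : ⟪u, p - !₂[ε, 0] - x⟫ = x 0 - p 0 + ε := by
    simp [u, PiLp.inner_apply, Fin.sum_univ_two]
    ring
  have hnorm : ‖u‖ = 1 := by simp [u, EuclideanSpace.norm_eq]
  rw [hinner, hnorm] at hsep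
  linarith

lemma exists_near_far_from_rays_of_lt (hε : 0 < ε) (hright : x 0 < p 0) :
    ∃ q, dist p q < 10 * ε ∧ ∀ n, ∀ r ∈ ray x (lacunaryDir n), ε ≤ dist r q := by
  set a := p 0 - x 0
  obtain ⟨y, hy, hfar⟩ := exists_abs_sub_le_forall_le_abs_sub (f := fun n : ℕ => a * (2 ^ n)⁻¹)
    (fun n => by positivity) (mul_inv_two_pow_lacunary (sub_pos.2 hright))
    (δ := 2 * ε) (by positivity) (p 1 - x 1)
  set q := p + !₂[0, y - (p 1 - x 1)]
  refine ⟨q, ?_, fun n r hr => ?_⟩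
  · simp [q, EuclideanSpace.norm_eq, Real.sqrt_sq_eq_abs]
    linarith
  -- `u` is normal to the `n`-th ray and reads off the height of `q` above it
  set u : EuclideanSpace ℝ (Fin 2) := !₂[-(2 ^ n)⁻¹, 1]
  have hsep := abs_inner_sub_le_norm_mul_dist_of_mem_ray (u := u)
    (by simp [u, lacunaryDir, PiLp.inner_apply, Fin.sum_univ_two]) hr q
  have hinner : ⟪u, q - x⟫ = y - a * (2 ^ n)⁻¹ := by
    simp [u, q, a, PiLp.inner_apply, Fin.sum_univ_two]
    ring
  have hnorm : ‖u‖ ≤ 2 := by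
    have hslope : ((2 ^ n : ℝ) ^ 2)⁻¹ ≤ 1 :=
      inv_le_one_of_one_le₀ (one_le_pow₀ (one_le_pow₀ one_le_two))
    simp only [u, EuclideanSpace.norm_eq, Fin.sum_univ_two]
    rw [Real.sqrt_le_left zero_le_two]
    simp
    linarith
  rw [hinner] at hsep
  nlinarith [hfar n, dist_nonneg (x := r) (y := q)]

end LacunaryRays

lemma exists_near_far_from_rays {ε : ℝ} (hε : 0 < ε) (x p : EuclideanSpace ℝ (Fin 2)) :
    ∃ q, dist p q < 10 * ε ∧ ∀ n, ∀ r ∈ ray x (lacunaryDir n), ε ≤ dist r q :=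
  (le_or_gt (p 0) (x 0)).elim (exists_near_far_from_rays_of_le hε)
    (exists_near_far_from_rays_of_lt hε)

lemma injective_normalize_lacunaryDir :
    Function.Injective fun n => ‖lacunaryDir n‖⁻¹ • lacunaryDir n := by
  intro n k h
  have h0 := congrArg (· 0) h
  have h1 := congrArg (· 1) h
  simp only [lacunaryDir, PiLp.smul_apply, Matrix.cons_val_zero, Matrix.cons_val_one,
    Matrix.cons_val_fin_one, smul_eq_mul, mul_one, inv_inj] at h0 h1
  rw [h0] at h1
  have hpow := inv_inj.1 (mul_left_cancel₀ (by simp) h1)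
  exact pow_right_injective₀ two_pos (by norm_num) hpow

theorem stmt19 (ε : ℝ) (hε : 0 < ε) (x : EuclideanSpace ℝ (Fin 2)) :
    ∃ Y : Set (EuclideanSpace ℝ (Fin 2)),
      (∃ R > (0 : ℝ), ∀ p : EuclideanSpace ℝ (Fin 2), ∃ y ∈ Y, dist p y < R) ∧
      {v : EuclideanSpace ℝ (Fin 2) |
        v ∈ sphere (0 : EuclideanSpace ℝ (Fin 2)) 1 ∧
          ε ≤ setDist (ray x v) (Y \ {x})}.Infinite := by
  set Y := {q | ∀ n, ∀ r ∈ ray x (lacunaryDir n), ε ≤ dist r q}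
  have hdense : ∀ p, ∃ q ∈ Y, dist p q < 10 * ε := fun p =>
    let ⟨q, hpq, hq⟩ := exists_near_far_from_rays hε x p; ⟨q, hq, hpq⟩
  have hxY : x ∉ Y := fun hx => (hx 0 x (self_mem_ray x _)).not_gt (by simpa using hε)
  obtain ⟨q, hqY, -⟩ := hdense x
  refine ⟨Y, ⟨10 * ε, by positivity, hdense⟩,
    Set.infinite_of_injective_forall_mem injective_normalize_lacunaryDir fun n => ?_⟩
  refine ⟨mem_sphere_zero_iff_norm.2 (norm_smul_inv_norm (lacunaryDir_ne_zero n)),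
    le_setDist ⟨x, self_mem_ray x _⟩ ⟨q, hqY, fun hqx => hxY (hqx ▸ hqY)⟩ ?_⟩
  rintro r hr b ⟨hbY, -⟩
  exact hbY n r (ray_smul_subset (by positivity) x _ hr)
end
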